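/- arXiv:1409.0454 — 3 statements merged into one kernel-verified Lean document; each statement's English description precedes it below -/
import Mathlib

section
/- Let S, U, V, X₁, X₂, Y be jointly distributed random variables taking values in finite sets such that (U,V) ↔ (S,X₁,X₂) ↔ Y is a Markov chain, i.e., I(U,V ; Y | S,X₁,X₂) = 0. Then I(U,X₁ ; Y | V,X₂) - I(U,X₁ ; S | V,X₂) ≤ I(X₁ ; Y | V,X₂). -/
open scoped BigOperators
open Classical

noncomputable section

/-- Probability that the random variable `X` equals `x` under the pmf `p`. -/
def pr {Ω α : Type*} [Fintype Ω] (p : Ω → ℝ) (X : Ω → α) (x : α) : ℝ :=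
  ∑ ω : Ω, if X ω = x then p ω else 0

/-- Shannon entropy (in bits), with the convention `0 · log₂ 0 = 0`. -/
def ent {Ω α : Type*} [Fintype Ω] (p : Ω → ℝ) (X : Ω → α) : ℝ :=
  -∑ x ∈ Finset.univ.image X, pr p X x * Real.logb 2 (pr p X x)

/-- Conditional entropy `H(X|Y) = H(X,Y) - H(Y)`. -/
def condEnt {Ω α β : Type*} [Fintype Ω] (p : Ω → ℝ) (X : Ω → α) (Y : Ω → β) : ℝ :=
  ent p (fun ω => (X ω, Y ω)) - ent p Y

/-- Mutual information `I(X;Y) = H(X) + H(Y) - H(X,Y)`. -/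
def mi {Ω α β : Type*} [Fintype Ω] (p : Ω → ℝ) (X : Ω → α) (Y : Ω → β) : ℝ :=
  ent p X + ent p Y - ent p (fun ω => (X ω, Y ω))

/-- Conditional mutual information `I(X;Y|Z) = H(X,Z) + H(Y,Z) - H(X,Y,Z) - H(Z)`. -/
def cmi {Ω α β γ : Type*} [Fintype Ω] (p : Ω → ℝ) (X : Ω → α) (Y : Ω → β) (Z : Ω → γ) : ℝ :=
  ent p (fun ω => (X ω, Z ω)) + ent p (fun ω => (Y ω, Z ω))
    - ent p (fun ω => (X ω, Y ω, Z ω)) - ent p Z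

/-- `p` is a probability mass function on the finite sample space `Ω`. -/
def IsPMF {Ω : Type*} [Fintype Ω] (p : Ω → ℝ) : Prop :=
  (∀ ω, 0 ≤ p ω) ∧ ∑ ω : Ω, p ω = 1

/-- The random variables `X` and `Y` are independent under `p`. -/
def IndepRV {Ω α β : Type*} [Fintype Ω] (p : Ω → ℝ) (X : Ω → α) (Y : Ω → β) : Prop :=
  ∀ x y, pr p (fun ω => (X ω, Y ω)) (x, y) = pr p X x * pr p Y y

end

/-!
The gap `I(X₁;Y|V,X₂) - (I(U,X₁;Y|V,X₂) - I(U,X₁;S|V,X₂))` is, by the chain rule, exactly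
`I(U;S|Y,X₁,V,X₂) + I(X₁;S|V,X₂) + I(V;Y|S,X₁,X₂) - I(U,V;Y|S,X₁,X₂)`. The last term vanishes by
the Markov chain and the other three are nonnegative. Nonnegativity of `I(X;Y|Z)` is Gibbs'
inequality: `log t ≤ t - 1` at `t = p(x,z) p(y,z) / (p(x,y,z) p(z))`, whose mean is at most `1`.
-/

open Finset Real

section

variable {Ω α β γ : Type*} [Fintype Ω] {p : Ω → ℝ}

lemma pr_nonneg (hp : ∀ ω, 0 ≤ p ω) (X : Ω → α) (x : α) : 0 ≤ pr p X x :=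
  sum_nonneg fun ω _ => by split_ifs <;> simp [hp ω]

lemma le_pr_apply (hp : ∀ ω, 0 ≤ p ω) (X : Ω → α) (ω : Ω) : p ω ≤ pr p X (X ω) := by
  have := single_le_sum (f := fun ω' => if X ω' = X ω then p ω' else 0)
    (fun ω' _ => by split_ifs <;> simp [hp ω']) (mem_univ ω)
  simpa [pr] using this

lemma sum_pr_mul (X : Ω → α) {s : Finset α} (hs : ∀ ω, X ω ∈ s) (g : α → ℝ) :
    ∑ x ∈ s, pr p X x * g x = ∑ ω, p ω * g (X ω) := by
  simp only [pr, sum_mul, ite_mul, zero_mul]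
  rw [sum_comm]
  exact sum_congr rfl fun ω _ => by rw [sum_ite_eq, if_pos (hs ω)]

lemma sum_pr [Fintype α] (hp : ∑ ω, p ω = 1) (X : Ω → α) : ∑ x, pr p X x = 1 := by
  simpa [hp] using sum_pr_mul (p := p) X (fun ω => mem_univ (X ω)) 1

lemma sum_pr_pair_left [Fintype α] (X : Ω → α) (Z : Ω → γ) (z : γ) :
    ∑ x, pr p (fun ω => (X ω, Z ω)) (x, z) = pr p Z z := by
  simp only [pr, Prod.mk.injEq, ite_and]
  rw [sum_comm]
  exact sum_congr rfl fun ω _ => by rw [sum_ite_eq]; simp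

lemma ent_mul_log_two (X : Ω → α) :
    ent p X * log 2 = -∑ ω, p ω * log (pr p X (X ω)) := by
  rw [ent, ← sum_pr_mul X (fun ω => mem_image_of_mem X (mem_univ ω)) fun x => log (pr p X x)]
  simp only [logb, neg_mul, sum_mul]
  congr 1
  exact sum_congr rfl fun x _ => by field_simp

lemma ent_eq_of_comp_eq_of_comp {X : Ω → α} {Y : Ω → β} (f : α → β) (g : β → α)
    (hY : Y = f ∘ X) (hX : X = g ∘ Y) : ent p X = ent p Y := by
  have hpr : ∀ ω, pr p X (X ω) = pr p Y (Y ω) := fun ω =>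
    sum_congr rfl fun ω' _ => by
      congr 1
      exact propext ⟨fun h => by rw [hY]; simp only [Function.comp_apply, h],
        fun h => by rw [hX]; simp only [Function.comp_apply, h]⟩
  apply mul_right_cancel₀ (log_pos one_lt_two).ne'
  simp only [ent_mul_log_two, hpr]

lemma cmi_mul_log_two (X : Ω → α) (Y : Ω → β) (Z : Ω → γ) :
    cmi p X Y Z * log 2 = ∑ ω, p ω *
      (log (pr p (fun ω => (X ω, Y ω, Z ω)) (X ω, Y ω, Z ω)) + log (pr p Z (Z ω))
        - log (pr p (fun ω => (X ω, Z ω)) (X ω, Z ω))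
        - log (pr p (fun ω => (Y ω, Z ω)) (Y ω, Z ω))) := by
  simp only [cmi, sub_mul, add_mul, ent_mul_log_two, mul_add, mul_sub, sum_add_distrib,
    sum_sub_distrib]
  ring

end

lemma sub_mul_div_le_mul_log {w q r a b : ℝ} (hw : 0 ≤ w) (hq : w ≤ q) (hr : w ≤ r) (ha : w ≤ a)
    (hb : w ≤ b) : w - w * (a * b / (q * r)) ≤ w * (log q + log r - log a - log b) := by
  rcases hw.eq_or_lt with rfl | hw
  · simp
  have hq := hw.trans_le hq
  have hr := hw.trans_le hr
  have ha := hw.trans_le ha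
  have hb := hw.trans_le hb
  have hgibbs := log_le_sub_one_of_pos (div_pos (mul_pos ha hb) (mul_pos hq hr))
  rw [log_div (by positivity) (by positivity), log_mul ha.ne' hb.ne', log_mul hq.ne' hr.ne']
    at hgibbs
  nlinarith

section

variable {Ω α β γ : Type*} [Fintype Ω] [Fintype α] [Fintype β] [Fintype γ] {p : Ω → ℝ}

lemma sum_pr_mul_pr_div_pr (hp : ∑ ω, p ω = 1) (X : Ω → α) (Y : Ω → β) (Z : Ω → γ) :
    ∑ t : α × β × γ, pr p (fun ω => (X ω, Z ω)) (t.1, t.2.2)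
      * pr p (fun ω => (Y ω, Z ω)) (t.2.1, t.2.2) / pr p Z t.2.2 = 1 := by
  calc _ = ∑ z, (∑ x, pr p (fun ω => (X ω, Z ω)) (x, z))
          * (∑ y, pr p (fun ω => (Y ω, Z ω)) (y, z)) / pr p Z z := by
        simp only [Fintype.sum_prod_type, sum_mul_sum, sum_div]
        exact (sum_congr rfl fun x _ => sum_comm).trans sum_comm
    _ = ∑ z, pr p Z z := by simp only [sum_pr_pair_left, mul_self_div_self]
    _ = 1 := sum_pr hp Z

lemma cmi_nonneg (hp : IsPMF p) (X : Ω → α) (Y : Ω → β) (Z : Ω → γ) : 0 ≤ cmi p X Y Z := by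
  set q := pr p (fun ω => (X ω, Y ω, Z ω))
  set a := pr p (fun ω => (X ω, Z ω))
  set b := pr p (fun ω => (Y ω, Z ω))
  set r := pr p Z
  have hmean : ∑ ω, p ω * (a (X ω, Z ω) * b (Y ω, Z ω) / (q (X ω, Y ω, Z ω) * r (Z ω))) ≤ 1 :=
    calc _ = ∑ t, q t * (a (t.1, t.2.2) * b (t.2.1, t.2.2) / (q t * r t.2.2)) :=
          (sum_pr_mul _ (fun ω => mem_univ _) _).symm
      _ ≤ ∑ t : α × β × γ, a (t.1, t.2.2) * b (t.2.1, t.2.2) / r t.2.2 := by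
          refine sum_le_sum fun t _ => ?_
          rcases eq_or_ne (q t) 0 with h | h
          · rw [h, zero_mul]
            exact div_nonneg (mul_nonneg (pr_nonneg hp.1 _ _) (pr_nonneg hp.1 _ _))
              (pr_nonneg hp.1 _ _)
          · rw [mul_div_assoc', mul_div_mul_left _ _ h]
      _ = 1 := sum_pr_mul_pr_div_pr hp.2 X Y Z
  have hgibbs := sum_le_sum fun ω (_ : ω ∈ univ) => sub_mul_div_le_mul_log (hp.1 ω)
    (le_pr_apply hp.1 (fun ω => (X ω, Y ω, Z ω)) ω) (le_pr_apply hp.1 Z ω)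
    (le_pr_apply hp.1 (fun ω => (X ω, Z ω)) ω) (le_pr_apply hp.1 (fun ω => (Y ω, Z ω)) ω)
  rw [sum_sub_distrib, hp.2] at hgibbs
  have hlog : 0 ≤ cmi p X Y Z * log 2 := by
    rw [cmi_mul_log_two]
    linarith
  exact nonneg_of_mul_nonneg_left hlog (log_pos one_lt_two)

end

lemma cmi_gap_eq {Ω 𝒮 𝒰 𝒱 𝒳₁ 𝒳₂ 𝒴 : Type*} [Fintype Ω] (p : Ω → ℝ)
    (S : Ω → 𝒮) (U : Ω → 𝒰) (V : Ω → 𝒱) (X₁ : Ω → 𝒳₁) (X₂ : Ω → 𝒳₂) (Y : Ω → 𝒴) :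
    cmi p X₁ Y (fun ω => (V ω, X₂ ω))
        - (cmi p (fun ω => (U ω, X₁ ω)) Y (fun ω => (V ω, X₂ ω))
          - cmi p (fun ω => (U ω, X₁ ω)) S (fun ω => (V ω, X₂ ω)))
      = cmi p U S (fun ω => (Y ω, X₁ ω, V ω, X₂ ω)) + cmi p X₁ S (fun ω => (V ω, X₂ ω))
        + cmi p V Y (fun ω => (S ω, X₁ ω, X₂ ω))
        - cmi p (fun ω => (U ω, V ω)) Y (fun ω => (S ω, X₁ ω, X₂ ω)) := by
  have h₁ : ent p (fun ω => ((U ω, X₁ ω), S ω, (V ω, X₂ ω)))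
      = ent p (fun ω => ((U ω, V ω), S ω, X₁ ω, X₂ ω)) :=
    ent_eq_of_comp_eq_of_comp (fun ⟨⟨u, x₁⟩, s, v, x₂⟩ => ((u, v), s, x₁, x₂))
      (fun ⟨⟨u, v⟩, s, x₁, x₂⟩ => ((u, x₁), s, v, x₂)) rfl rfl
  have h₂ : ent p (fun ω => (X₁ ω, S ω, (V ω, X₂ ω)))
      = ent p (fun ω => (V ω, S ω, X₁ ω, X₂ ω)) :=
    ent_eq_of_comp_eq_of_comp (fun ⟨x₁, s, v, x₂⟩ => (v, s, x₁, x₂))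
      (fun ⟨v, s, x₁, x₂⟩ => (x₁, s, v, x₂)) rfl rfl
  have h₃ : ent p (fun ω => ((U ω, X₁ ω), Y ω, (V ω, X₂ ω)))
      = ent p (fun ω => (U ω, Y ω, X₁ ω, V ω, X₂ ω)) :=
    ent_eq_of_comp_eq_of_comp (fun ⟨⟨u, x₁⟩, y, w⟩ => (u, y, x₁, w))
      (fun ⟨u, y, x₁, w⟩ => ((u, x₁), y, w)) rfl rfl
  have h₄ : ent p (fun ω => (S ω, Y ω, X₁ ω, V ω, X₂ ω))
      = ent p (fun ω => (V ω, Y ω, S ω, X₁ ω, X₂ ω)) :=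
    ent_eq_of_comp_eq_of_comp (fun ⟨s, y, x₁, v, x₂⟩ => (v, y, s, x₁, x₂))
      (fun ⟨v, y, s, x₁, x₂⟩ => (s, y, x₁, v, x₂)) rfl rfl
  have h₅ : ent p (fun ω => (U ω, S ω, (Y ω, X₁ ω, V ω, X₂ ω)))
      = ent p (fun ω => ((U ω, V ω), Y ω, S ω, X₁ ω, X₂ ω)) :=
    ent_eq_of_comp_eq_of_comp (fun ⟨u, s, y, x₁, v, x₂⟩ => ((u, v), y, s, x₁, x₂))
      (fun ⟨⟨u, v⟩, y, s, x₁, x₂⟩ => (u, s, y, x₁, v, x₂)) rfl rfl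
  have h₆ : ent p (fun ω => (Y ω, X₁ ω, V ω, X₂ ω))
      = ent p (fun ω => (X₁ ω, Y ω, (V ω, X₂ ω))) :=
    ent_eq_of_comp_eq_of_comp (fun ⟨y, x₁, w⟩ => (x₁, y, w)) (fun ⟨x₁, y, w⟩ => (y, x₁, w))
      rfl rfl
  simp only [cmi]
  linarith

/-- If `(U,V) ↔ (S,X₁,X₂) ↔ Y` is a Markov chain, then
`I(U,X₁ ; Y | V,X₂) - I(U,X₁ ; S | V,X₂) ≤ I(X₁ ; Y | V,X₂)`. -/
theorem remove_aux_U_individual_rate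
    {Ω 𝒮 𝒰 𝒱 𝒳₁ 𝒳₂ 𝒴 : Type*} [Fintype Ω] [Fintype 𝒮] [Fintype 𝒰] [Fintype 𝒱]
    [Fintype 𝒳₁] [Fintype 𝒳₂] [Fintype 𝒴]
    (p : Ω → ℝ) (hp : IsPMF p)
    (S : Ω → 𝒮) (U : Ω → 𝒰) (V : Ω → 𝒱) (X₁ : Ω → 𝒳₁) (X₂ : Ω → 𝒳₂) (Y : Ω → 𝒴)
    (hMarkov : cmi p (fun ω => (U ω, V ω)) Y (fun ω => (S ω, X₁ ω, X₂ ω)) = 0) :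
    cmi p (fun ω => (U ω, X₁ ω)) Y (fun ω => (V ω, X₂ ω))
        - cmi p (fun ω => (U ω, X₁ ω)) S (fun ω => (V ω, X₂ ω))
      ≤ cmi p X₁ Y (fun ω => (V ω, X₂ ω)) := by
  have hgap := cmi_gap_eq p S U V X₁ X₂ Y
  linarith [cmi_nonneg hp U S (fun ω => (Y ω, X₁ ω, V ω, X₂ ω)),
    cmi_nonneg hp X₁ S (fun ω => (V ω, X₂ ω)), cmi_nonneg hp V Y (fun ω => (S ω, X₁ ω, X₂ ω))]
end

section
/- For the switch channel, let 𝒱 be any finite set and let (S,V,X₁,X₂,Y) be random variables whose joint pmf has the product form (1/2)·P_{X₂}(x₂)·P_{X₁|X₂}(x₁|x₂)·P_{V|S,X₁,X₂}(v|s,x₁,x₂) with Y = X_S. If I(V,X₁,X₂ ; Y) - I(V,X₁,X₂ ; S) ≥ 1, then I(X₁ ; Y | V,X₂) = 0. Consequently there is no such joint distribution simultaneously satisfying 0 ≤ I(V,X₂;Y) - I(V,X₂;S), 1/2 ≤ I(X₁;Y|V,X₂) and 1 ≤ I(V,X₁,X₂;Y) - I(V,X₁,X₂;S); that is, the rate pair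 (R_c,R₁) = (1/2,1/2) does not belong to the outer bound R^out for the switch channel. -/
open scoped BigOperators
open Classical

/-!
Write `A = (V, X₁, X₂)`, so that `Y = X_S` is a function of `(S, A)`. Then
`I(A;Y) - I(A;S) = (H(Y) - H(S)) + (H(A,S) - H(A,Y))`, and `H(Y) ≤ 1 = H(S)` because `S` is
uniform. Given `A`, the output `Y` determines `S` unless `X₁ = X₂`, and on that event replacing
`S` by `Y` loses at most one bit; hence `H(A,S) - H(A,Y) ≤ P(X₁ = X₂)`. A rate difference of at
least `1` therefore forces `X₁ = X₂` almost surely, so `X₁` is a function of `(V, X₂)` and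
`I(X₁;Y|V,X₂) = 0 < 1/2`.
-/

namespace SwitchChannel

open Finset Real

variable {Ω α β γ : Type*} [Fintype Ω] {p : Ω → ℝ}

lemma negMulLog_add_le {u v : ℝ} (hu : 0 ≤ u) (hv : 0 ≤ v) :
    negMulLog u + negMulLog v ≤ negMulLog (u + v) + (u + v) * log 2 := by
  have hmid := concaveOn_negMulLog.2 (Set.mem_Ici.2 hu) (Set.mem_Ici.2 hv)
    (by norm_num : (0 : ℝ) ≤ 1 / 2) (by norm_num : (0 : ℝ) ≤ 1 / 2) (by norm_num)
  have hhalf : negMulLog ((1 / 2 : ℝ) • u + (1 / 2 : ℝ) • v)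
      = (negMulLog (u + v) + (u + v) * log 2) / 2 := by
    rw [smul_eq_mul, smul_eq_mul, ← mul_add, negMulLog_mul, negMulLog, one_div, log_inv]
    ring
  rw [hhalf, smul_eq_mul, smul_eq_mul] at hmid
  linarith

lemma sum_mul_mul_eq_one {ι κ : Type*} [Fintype α] [Fintype ι] [Fintype κ] {P : κ → ℝ}
    {Q : ι → κ → ℝ} {R : ι → κ → α → ℝ} (hP : ∑ k, P k = 1) (hQ : ∀ k, ∑ i, Q i k = 1)
    (hR : ∀ i k, ∑ a, R i k a = 1) :
    ∑ w : α × ι × κ, P w.2.2 * Q w.2.1 w.2.2 * R w.2.1 w.2.2 w.1 = 1 := by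
  rw [Fintype.sum_prod_type, sum_comm]
  simp_rw [Fintype.sum_prod_type]
  rw [sum_comm]
  simp [← mul_sum, hR, hQ, hP]

lemma pr_nonneg (hp : ∀ ω, 0 ≤ p ω) (X : Ω → α) (x : α) : 0 ≤ pr p X x :=
  sum_nonneg fun ω _ => by split_ifs <;> simp [hp ω]

lemma pr_eq_zero_of_notMem_image {X : Ω → α} {x : α} (hx : x ∉ univ.image X) :
    pr p X x = 0 :=
  sum_eq_zero fun ω _ => if_neg fun h : X ω = x => hx (h ▸ mem_image_of_mem X (mem_univ ω))

lemma sum_pr [Fintype α] (X : Ω → α) : ∑ x, pr p X x = ∑ ω, p ω := by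
  unfold pr
  rw [sum_comm]
  simp

lemma sum_pr_prod [Fintype β] (X : Ω → α) (Y : Ω → β) (x : α) :
    ∑ y, pr p (fun ω => (X ω, Y ω)) (x, y) = pr p X x := by
  unfold pr
  rw [sum_comm]
  refine sum_congr rfl fun ω _ => ?_
  by_cases h : X ω = x <;> simp [h]

lemma sum_mul_pr [Fintype α] (X : Ω → α) (f : α → ℝ) :
    ∑ x, f x * pr p X x = ∑ ω, f (X ω) * p ω := by
  unfold pr
  simp_rw [mul_sum]
  rw [sum_comm]
  simp

lemma pr_congr {X X' : Ω → α} (h : ∀ ω, p ω ≠ 0 → X ω = X' ω) : pr p X = pr p X' := by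
  funext x
  refine sum_congr rfl fun ω _ => ?_
  by_cases hω : p ω = 0
  · simp [hω]
  · rw [h ω hω]

lemma pr_eq_of_pr_prod_eq_mul [Fintype β] {S : Ω → α} {W : Ω → β} {c : α → ℝ}
    {K : α → β → ℝ} (h : ∀ s w, pr p (fun ω => (S ω, W ω)) (s, w) = c s * K s w)
    (hK : ∀ s, ∑ w, K s w = 1) (s : α) : pr p S s = c s := by
  rw [← sum_pr_prod S W s]
  simp [h, ← mul_sum, hK]

lemma IsPMF.eq_zero_of_one_le_sum_ite (hp : IsPMF p) {E : Ω → Prop} [DecidablePred E]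
    (hE : 1 ≤ ∑ ω, if E ω then p ω else 0) {ω : Ω} (hω : ¬E ω) : p ω = 0 := by
  have hsplit : ∑ ω, p ω = (∑ ω, if E ω then p ω else 0) + ∑ ω, if E ω then 0 else p ω := by
    rw [← sum_add_distrib]
    exact sum_congr rfl fun ω _ => by split_ifs <;> simp
  have hnonneg : ∀ ω ∈ univ, 0 ≤ if E ω then 0 else p ω := fun ω _ => by
    split_ifs
    exacts [le_rfl, hp.1 ω]
  have hzero := (sum_eq_zero_iff_of_nonneg hnonneg).1
    (le_antisymm (by linarith [hp.2]) (sum_nonneg hnonneg)) ω (mem_univ ω)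
  rwa [if_neg hω] at hzero

lemma ent_eq_sum_negMulLog [Fintype α] (X : Ω → α) :
    ent p X = (∑ x, negMulLog (pr p X x)) / log 2 := by
  rw [ent, ← sum_subset (subset_univ (univ.image X)) fun x _ hx => by
    rw [pr_eq_zero_of_notMem_image hx, negMulLog_zero], sum_div, ← sum_neg_distrib]
  refine sum_congr rfl fun x _ => ?_
  rw [logb, negMulLog]
  ring

lemma pr_comp_of_injective (X : Ω → α) {g : α → β} (hg : g.Injective) (x : α) :
    pr p (fun ω => g (X ω)) (g x) = pr p X x :=
  sum_congr rfl fun ω _ => by rw [hg.eq_iff]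

lemma ent_comp_of_injective (X : Ω → α) {g : α → β} (hg : g.Injective) :
    ent p (fun ω => g (X ω)) = ent p X := by
  have himage : univ.image (fun ω => g (X ω)) = (univ.image X).image g := image_image.symm
  rw [ent, ent, himage, sum_image fun x _ y _ h => hg h]
  simp only [pr_comp_of_injective X hg]

lemma ent_congr [Fintype α] {X X' : Ω → α} (h : ∀ ω, p ω ≠ 0 → X ω = X' ω) :
    ent p X = ent p X' := by
  rw [ent_eq_sum_negMulLog, ent_eq_sum_negMulLog, pr_congr h]

lemma ent_prod_comp_self (Z : Ω → γ) (f : γ → α) :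
    ent p (fun ω => (f (Z ω), Z ω)) = ent p Z :=
  ent_comp_of_injective Z (g := fun z => (f z, z)) fun _ _ h => congrArg Prod.snd h

lemma cmi_eq_zero_of_ae_eq_comp [Fintype α] [Fintype β] [Fintype γ] {X : Ω → α} (Y : Ω → β)
    {Z : Ω → γ} {f : γ → α} (h : ∀ ω, p ω ≠ 0 → X ω = f (Z ω)) : cmi p X Y Z = 0 := by
  have hXZ : ent p (fun ω => (X ω, Z ω)) = ent p Z :=
    (ent_congr fun ω hω => by rw [h ω hω]).trans (ent_prod_comp_self Z f)
  have hXYZ : ent p (fun ω => (X ω, Y ω, Z ω)) = ent p (fun ω => (Y ω, Z ω)) :=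
    (ent_congr fun ω hω => by rw [h ω hω]).trans
      (ent_prod_comp_self (fun ω => (Y ω, Z ω)) fun yz => f yz.2)
  rw [cmi, hXZ, hXYZ]
  ring

lemma ent_le_one (hp : IsPMF p) (Y : Ω → Bool) : ent p Y ≤ 1 := by
  have hsum : pr p Y false + pr p Y true = 1 := by
    rw [← hp.2, ← sum_pr Y, Fintype.sum_bool, add_comm]
  have hbound := negMulLog_add_le (pr_nonneg hp.1 Y false) (pr_nonneg hp.1 Y true)
  rw [hsum, negMulLog_one, zero_add, one_mul] at hbound
  rw [ent_eq_sum_negMulLog, Fintype.sum_bool, div_le_one (log_pos one_lt_two)]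
  linarith

lemma ent_eq_one_of_pr_eq_half {S : Ω → Fin 2} (h : ∀ s, pr p S s = 1 / 2) : ent p S = 1 := by
  rw [ent_eq_sum_negMulLog, Fin.sum_univ_two, h, h, negMulLog, one_div, log_inv]
  field_simp
  ring

lemma pr_prod_switch (A : Ω → α) (S : Ω → Fin 2) (g : Fin 2 → α → β) (a : α) (y : β) :
    pr p (fun ω => (A ω, g (S ω) (A ω))) (a, y)
      = (if g 0 a = y then pr p (fun ω => (A ω, S ω)) (a, 0) else 0)
        + (if g 1 a = y then pr p (fun ω => (A ω, S ω)) (a, 1) else 0) := by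
  unfold pr
  rw [ite_sum_zero, ite_sum_zero, ← sum_add_distrib]
  refine sum_congr rfl fun ω _ => ?_
  rcases Fin.exists_fin_two.mp ⟨S ω, rfl⟩ with hs | hs <;>
    by_cases ha : A ω = a <;> simp [hs, ha]

lemma sum_negMulLog_pr_prod_le_switch [Fintype β] (hp : ∀ ω, 0 ≤ p ω)
    (A : Ω → α) (S : Ω → Fin 2) (g : Fin 2 → α → β) (a : α) :
    ∑ s, negMulLog (pr p (fun ω => (A ω, S ω)) (a, s))
      ≤ ∑ y, negMulLog (pr p (fun ω => (A ω, g (S ω) (A ω))) (a, y))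
        + if g 0 a = g 1 a then pr p A a * log 2 else 0 := by
  simp only [pr_prod_switch, Fin.sum_univ_two]
  set u₀ := pr p (fun ω => (A ω, S ω)) (a, 0)
  set u₁ := pr p (fun ω => (A ω, S ω)) (a, 1)
  by_cases hg : g 0 a = g 1 a
  · have hA : pr p A a = u₀ + u₁ := by rw [← sum_pr_prod A S, Fin.sum_univ_two]
    rw [sum_eq_single (g 0 a) (fun y _ hy => by simp [Ne.symm hy, ← hg]) (by simp),
      if_pos hg, hA]
    simpa [← hg] using negMulLog_add_le (pr_nonneg hp _ (a, 0)) (pr_nonneg hp _ (a, 1))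
  · rw [sum_eq_add (g 0 a) (g 1 a) hg (fun y _ hy => by simp [Ne.symm hy.1, Ne.symm hy.2])
      (by simp) (by simp)]
    simp [hg, Ne.symm hg]

lemma ent_prod_sub_ent_prod_switch_le [Fintype α] [Fintype β] (hp : ∀ ω, 0 ≤ p ω)
    (A : Ω → α) (S : Ω → Fin 2) (g : Fin 2 → α → β) :
    ent p (fun ω => (A ω, S ω)) - ent p (fun ω => (A ω, g (S ω) (A ω)))
      ≤ ∑ ω, if g 0 (A ω) = g 1 (A ω) then p ω else 0 := by
  have hfibres := sum_le_sum fun a (_ : a ∈ univ) =>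
    sum_negMulLog_pr_prod_le_switch hp A S g a
  have hcoll : ∑ a, (if g 0 a = g 1 a then pr p A a * log 2 else 0)
      = (∑ ω, if g 0 (A ω) = g 1 (A ω) then p ω else 0) * log 2 := by
    calc ∑ a, (if g 0 a = g 1 a then pr p A a * log 2 else 0)
        = ∑ a, (if g 0 a = g 1 a then log 2 else 0) * pr p A a :=
          sum_congr rfl fun a _ => by split_ifs <;> ring
      _ = ∑ ω, (if g 0 (A ω) = g 1 (A ω) then log 2 else 0) * p ω := sum_mul_pr A _
      _ = _ := by
          rw [sum_mul]
          exact sum_congr rfl fun ω _ => by split_ifs <;> ring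
  rw [sum_add_distrib, hcoll] at hfibres
  rw [ent_eq_sum_negMulLog, ent_eq_sum_negMulLog, Fintype.sum_prod_type, Fintype.sum_prod_type,
    ← sub_div, div_le_iff₀ (log_pos one_lt_two)]
  linarith

end SwitchChannel

open SwitchChannel in
/-- **Switch channel, Example 1 (second part).**  Under the product-form joint pmf of the
switch channel with `Y = X_S`: if `I(V,X₁,X₂;Y) - I(V,X₁,X₂;S) ≥ 1` then
`I(X₁;Y|V,X₂) = 0`; consequently no such joint distribution simultaneously satisfies
`0 ≤ I(V,X₂;Y) - I(V,X₂;S)`, `1/2 ≤ I(X₁;Y|V,X₂)` and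
`1 ≤ I(V,X₁,X₂;Y) - I(V,X₁,X₂;S)`, i.e. the rate pair `(1/2,1/2)` is not in the outer
bound `R^out` for the switch channel. -/
theorem switch_channel_half_half_not_in_outer_bound
    {Ω 𝒱 : Type*} [Fintype Ω] [Fintype 𝒱]
    (p : Ω → ℝ) (hp : IsPMF p)
    (S : Ω → Fin 2) (V : Ω → 𝒱) (X₁ X₂ Y : Ω → Bool)
    (hform : ∃ (PX2 : Bool → ℝ) (PX12 : Bool → Bool → ℝ) (PV : Fin 2 → Bool → Bool → 𝒱 → ℝ),
      (∀ x2, 0 ≤ PX2 x2) ∧ (∑ x2, PX2 x2 = 1) ∧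
      (∀ x1 x2, 0 ≤ PX12 x1 x2) ∧ (∀ x2, ∑ x1, PX12 x1 x2 = 1) ∧
      (∀ s x1 x2 v, 0 ≤ PV s x1 x2 v) ∧ (∀ s x1 x2, ∑ v, PV s x1 x2 v = 1) ∧
      (∀ s v x1 x2, pr p (fun ω => (S ω, V ω, X₁ ω, X₂ ω)) (s, v, x1, x2)
          = 1/2 * PX2 x2 * PX12 x1 x2 * PV s x1 x2 v))
    (hY : ∀ ω, Y ω = if S ω = 0 then X₁ ω else X₂ ω) :
    (1 ≤ mi p (fun ω => (V ω, X₁ ω, X₂ ω)) Y - mi p (fun ω => (V ω, X₁ ω, X₂ ω)) S →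
      cmi p X₁ Y (fun ω => (V ω, X₂ ω)) = 0) ∧
    ¬(0 ≤ mi p (fun ω => (V ω, X₂ ω)) Y - mi p (fun ω => (V ω, X₂ ω)) S ∧
      (1:ℝ)/2 ≤ cmi p X₁ Y (fun ω => (V ω, X₂ ω)) ∧
      1 ≤ mi p (fun ω => (V ω, X₁ ω, X₂ ω)) Y - mi p (fun ω => (V ω, X₁ ω, X₂ ω)) S) := by
  obtain ⟨PX2, PX12, PV, -, hPX2, -, hPX12, -, hPV, hpmf⟩ := hform
  have hS : ∀ s, pr p S s = 1 / 2 :=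
    pr_eq_of_pr_prod_eq_mul (W := fun ω => (V ω, X₁ ω, X₂ ω))
      (fun s w => by rw [hpmf s w.1 w.2.1 w.2.2]; ring)
      fun s => sum_mul_mul_eq_one hPX2 hPX12 fun x1 x2 => hPV s x1 x2
  have hcmi : 1 ≤ mi p (fun ω => (V ω, X₁ ω, X₂ ω)) Y - mi p (fun ω => (V ω, X₁ ω, X₂ ω)) S →
      cmi p X₁ Y (fun ω => (V ω, X₂ ω)) = 0 := by
    intro hrate
    have hgap := ent_prod_sub_ent_prod_switch_le hp.1 (fun ω => (V ω, X₁ ω, X₂ ω)) S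
      fun s a => if s = 0 then a.2.1 else a.2.2
    simp only [Fin.isValue, ↓reduceIte, one_ne_zero, ← hY] at hgap
    simp only [mi, ent_eq_one_of_pr_eq_half hS] at hrate
    have hcoll : 1 ≤ ∑ ω, if X₁ ω = X₂ ω then p ω else 0 := by linarith [ent_le_one hp Y]
    refine cmi_eq_zero_of_ae_eq_comp Y (f := Prod.snd) fun ω hω => ?_
    by_contra hne
    exact hω (hp.eq_zero_of_one_le_sum_ite hcoll hne)
  exact ⟨hcmi, fun ⟨_, hhalf, hrate⟩ => by linarith [hcmi hrate]⟩
end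

section
/- (Proposition 2, part 2.) For any finite alphabets 𝒮, 𝒳₁, 𝒳₂, 𝒴, any state pmf Q_S on 𝒮 and any channel transition kernel W(y|x₁,x₂,s): if a pair (R_c,R₁) belongs to the outer bound region R^out, then it is witnessed by an auxiliary variable on an alphabet of bounded size, i.e., there exist a finite set 𝒱 with |𝒱| ≤ |𝒮|·|𝒳₁|·|𝒳₂| + 2 and random variables (S,V,X₁,X₂,Y) of the required product form satisfying the defining inequalities of R^out. -/
open scoped BigOperators
open Classical

noncomputable section
/-! The outer bound `R^out` of Theorem 2.  The joint sample space is the product of the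
alphabets `𝒮 × 𝒱 × 𝒳₁ × 𝒳₂ × 𝒴`, with the random variables being the coordinate
projections, and the joint pmf having the product form
`Q_S(s)·P_{X₂}(x₂)·P_{X₁|X₂}(x₁|x₂)·P_{V|S,X₁,X₂}(v|s,x₁,x₂)·W(y|x₁,x₂,s)`. -/

/-- The product-form joint pmf on `𝒮 × 𝒱 × 𝒳₁ × 𝒳₂ × 𝒴`. -/
def jointP {𝒮 𝒱 𝒳₁ 𝒳₂ 𝒴 : Type*}
    (QS : 𝒮 → ℝ) (W : 𝒴 → 𝒳₁ → 𝒳₂ → 𝒮 → ℝ)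
    (PX2 : 𝒳₂ → ℝ) (PX12 : 𝒳₁ → 𝒳₂ → ℝ) (PV : 𝒮 → 𝒳₁ → 𝒳₂ → 𝒱 → ℝ) :
    𝒮 × 𝒱 × 𝒳₁ × 𝒳₂ × 𝒴 → ℝ :=
  fun q => QS q.1 * PX2 q.2.2.2.1 * PX12 q.2.2.1 q.2.2.2.1 *
    PV q.1 q.2.2.1 q.2.2.2.1 q.2.1 * W q.2.2.2.2 q.2.2.1 q.2.2.2.1 q.1

/-- `(Rc, R1)` is witnessed in `R^out` by the auxiliary alphabet `𝒱`. -/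
def RoutW {𝒮 𝒳₁ 𝒳₂ 𝒴 : Type*} [Fintype 𝒮] [Fintype 𝒳₁] [Fintype 𝒳₂] [Fintype 𝒴]
    (QS : 𝒮 → ℝ) (W : 𝒴 → 𝒳₁ → 𝒳₂ → 𝒮 → ℝ)
    (𝒱 : Type) [Fintype 𝒱] (Rc R1 : ℝ) : Prop :=
  ∃ (PX2 : 𝒳₂ → ℝ) (PX12 : 𝒳₁ → 𝒳₂ → ℝ) (PV : 𝒮 → 𝒳₁ → 𝒳₂ → 𝒱 → ℝ),
    (∀ x2, 0 ≤ PX2 x2) ∧ (∑ x2, PX2 x2 = 1) ∧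
    (∀ x1 x2, 0 ≤ PX12 x1 x2) ∧ (∀ x2, ∑ x1, PX12 x1 x2 = 1) ∧
    (∀ s x1 x2 v, 0 ≤ PV s x1 x2 v) ∧ (∀ s x1 x2, ∑ v, PV s x1 x2 v = 1) ∧
    (0 ≤ mi (jointP QS W PX2 PX12 PV) (fun q => (q.2.1, q.2.2.2.1)) (fun q => q.2.2.2.2)
          - mi (jointP QS W PX2 PX12 PV) (fun q => (q.2.1, q.2.2.2.1)) (fun q => q.1)) ∧
    (R1 ≤ cmi (jointP QS W PX2 PX12 PV) (fun q => q.2.2.1) (fun q => q.2.2.2.2)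
            (fun q => (q.2.1, q.2.2.2.1))) ∧
    (Rc + R1 ≤
      mi (jointP QS W PX2 PX12 PV) (fun q => (q.2.1, q.2.2.1, q.2.2.2.1)) (fun q => q.2.2.2.2)
        - mi (jointP QS W PX2 PX12 PV) (fun q => (q.2.1, q.2.2.1, q.2.2.2.1)) (fun q => q.1))

/-- The outer bound `R^out` as a subset of `ℝ²`. -/
def Rout {𝒮 𝒳₁ 𝒳₂ 𝒴 : Type*} [Fintype 𝒮] [Fintype 𝒳₁] [Fintype 𝒳₂] [Fintype 𝒴]
    (QS : 𝒮 → ℝ) (W : 𝒴 → 𝒳₁ → 𝒳₂ → 𝒮 → ℝ) : Set (ℝ × ℝ) :=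
  {R | 0 ≤ R.1 ∧ 0 ≤ R.2 ∧ ∃ (𝒱 : Type) (_ : Fintype 𝒱), RoutW QS W 𝒱 R.1 R.2}

end

noncomputable section
namespace Aux

def plog (t : ℝ) : ℝ := t * Real.logb 2 t

@[simp] lemma plog_zero : plog 0 = 0 := by simp [plog]

lemma plog_mul (a b : ℝ) : plog (a * b) = a * plog b + b * plog a := by
  rcases eq_or_ne a 0 with rfl | ha
  · simp
  rcases eq_or_ne b 0 with rfl | hb
  · simp
  · simp only [plog, Real.logb]
    rw [Real.log_mul ha hb]
    ring

variable {Ω Ω' α β : Type*} [Fintype Ω] [Fintype Ω']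

lemma pr_eq_zero_of_not_mem_image (p : Ω → ℝ) (X : Ω → α) {a : α}
    (h : a ∉ Finset.univ.image X) : pr p X a = 0 := by
  apply Finset.sum_eq_zero
  intro ω _
  have : X ω ≠ a := fun he => h (Finset.mem_image.2 ⟨ω, Finset.mem_univ _, he⟩)
  simp [this]

lemma ent_eq_sum [Fintype α] (p : Ω → ℝ) (X : Ω → α) :
    ent p X = -∑ a : α, plog (pr p X a) := by
  unfold ent plog
  have := Finset.sum_subset (Finset.subset_univ (Finset.univ.image X))
    (f := fun a => pr p X a * Real.logb 2 (pr p X a)) ?_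
  · rw [this]
  · intro a _ ha
    simp [pr_eq_zero_of_not_mem_image p X ha]

lemma ent_congr [Fintype α] {p : Ω → ℝ} {q : Ω' → ℝ} {X : Ω → α} {Y : Ω' → α}
    (h : ∀ a, pr p X a = pr q Y a) : ent p X = ent q Y := by
  rw [ent_eq_sum, ent_eq_sum]
  simp [h]

lemma pr_comp_inj (p : Ω → ℝ) (X : Ω → α) {f : α → β} (hf : Function.Injective f) (a : α) :
    pr p (fun ω => f (X ω)) (f a) = pr p X a := by
  unfold pr
  congr 1; funext ω
  simp [hf.eq_iff]

lemma ent_comp_inj (p : Ω → ℝ) (X : Ω → α) {f : α → β} (hf : Function.Injective f) :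
    ent p (fun ω => f (X ω)) = ent p X := by
  unfold ent
  have himg : (Finset.univ.image fun ω => f (X ω)) = (Finset.univ.image X).image f := by
    ext b; simp [Finset.mem_image]
  rw [himg, Finset.sum_image (fun x _ y _ h => hf h)]
  congr 1
  refine Finset.sum_congr rfl fun a _ => ?_
  rw [pr_comp_inj p X hf]

/-- conditional pmf given `V = v`. -/
def cond (p : Ω → ℝ) (V : Ω → β) (v : β) : Ω → ℝ :=
  fun ω => (pr p V v)⁻¹ * (if V ω = v then p ω else 0)

lemma pr_nonneg (p : Ω → ℝ) (hp : ∀ ω, 0 ≤ p ω) (X : Ω → α) (a : α) : 0 ≤ pr p X a :=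
  Finset.sum_nonneg fun ω _ => by split
                                  exacts [hp ω, le_rfl]

lemma cond_nonneg (p : Ω → ℝ) (hp : ∀ ω, 0 ≤ p ω) (V : Ω → β) (v : β) (ω : Ω) :
    0 ≤ cond p V v ω := by
  refine mul_nonneg (inv_nonneg.2 (pr_nonneg p hp V v)) ?_
  split
  exacts [hp ω, le_rfl]

lemma pr_pair_eq (p : Ω → ℝ) (hp : ∀ ω, 0 ≤ p ω) (V : Ω → β) (Z : Ω → α) (v : β) (z : α) :
    pr p (fun ω => (V ω, Z ω)) (v, z) = pr p V v * pr (cond p V v) Z z := by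
  rcases eq_or_ne (pr p V v) 0 with h0 | h0
  · rw [h0, zero_mul]
    apply Finset.sum_eq_zero
    intro ω _
    have hω : (if V ω = v then p ω else 0) = 0 := by
      have := (Finset.sum_eq_zero_iff_of_nonneg (fun ω _ => by split; exacts [hp ω, le_rfl])).1 h0 ω (Finset.mem_univ ω)
      exact this
    by_cases hv : V ω = v
    · have hpω : p ω = 0 := by simpa [hv] using hω
      simp [Prod.ext_iff, hpω]
    · simp [Prod.ext_iff, hv]
  · unfold cond
    set a := pr p V v with ha
    unfold pr
    rw [Finset.mul_sum]
    refine Finset.sum_congr rfl fun ω _ => ?_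
    by_cases hv : V ω = v <;> by_cases hz : Z ω = z
    · simp only [Prod.ext_iff, hv, hz, and_self, if_true, if_pos rfl]
      rw [← mul_assoc, mul_inv_cancel₀ h0, one_mul]
    · simp [Prod.ext_iff, hv, hz]
    · simp [Prod.ext_iff, hv, hz]
    · simp [Prod.ext_iff, hv, hz]

lemma sum_pr_eq_one_of_cond (p : Ω → ℝ) (V : Ω → β) (v : β) [Fintype α] (Z : Ω → α)
    (h0 : pr p V v ≠ 0) : ∑ z : α, pr (cond p V v) Z z = 1 := by
  unfold pr cond
  rw [Finset.sum_comm]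
  have : ∀ ω : Ω, ∑ z : α, (if Z ω = z then (pr p V v)⁻¹ * (if V ω = v then p ω else 0) else 0)
      = (pr p V v)⁻¹ * (if V ω = v then p ω else 0) := by
    intro ω; simp
  rw [Finset.sum_congr rfl fun ω _ => this ω, ← Finset.mul_sum]
  exact inv_mul_cancel₀ h0

lemma ent_pair_decomp [Fintype α] [Fintype β] (p : Ω → ℝ) (hp : ∀ ω, 0 ≤ p ω)
    (V : Ω → β) (Z : Ω → α) :
    ent p (fun ω => (V ω, Z ω)) = ent p V + ∑ v : β, pr p V v * ent (cond p V v) Z := by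
  rw [ent_eq_sum, ent_eq_sum, Fintype.sum_prod_type]
  have key : ∀ v : β, ∑ z : α, plog (pr p (fun ω => (V ω, Z ω)) (v, z))
      = pr p V v * (∑ z : α, plog (pr (cond p V v) Z z)) + plog (pr p V v) := by
    intro v
    rcases eq_or_ne (pr p V v) 0 with h0 | h0
    · rw [h0]
      simp only [zero_mul, plog_zero, add_zero]
      refine Finset.sum_eq_zero fun z _ => ?_
      rw [pr_pair_eq p hp V Z v z, h0, zero_mul, plog_zero]
    · have hsum := sum_pr_eq_one_of_cond p V v Z h0
      calc ∑ z : α, plog (pr p (fun ω => (V ω, Z ω)) (v, z))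
          = ∑ z : α, (pr p V v * plog (pr (cond p V v) Z z)
              + pr (cond p V v) Z z * plog (pr p V v)) := by
            refine Finset.sum_congr rfl fun z _ => ?_
            rw [pr_pair_eq p hp V Z v z, plog_mul]
        _ = _ := by
            rw [Finset.sum_add_distrib, ← Finset.mul_sum, ← Finset.sum_mul, hsum, one_mul]
  rw [Finset.sum_congr rfl fun v _ => key v, Finset.sum_add_distrib]
  have hent : ∀ v : β, pr p V v * ent (cond p V v) Z
      = -(pr p V v * ∑ z : α, plog (pr (cond p V v) Z z)) := by
    intro v; rw [ent_eq_sum]; ring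
  rw [Finset.sum_congr rfl fun v _ => hent v, Finset.sum_neg_distrib]
  ring


lemma reduce_aux {ι κ : Type*} [Fintype ι] [Fintype κ]
    (c : ι → κ → ℝ) (hc : ∀ i, ∑ k, c i k = 1)
    (f₁ f₂ f₃ : ι → ℝ) :
    ∀ n (lam : ι → ℝ), (∀ i, 0 ≤ lam i) →
    (Finset.univ.filter fun i => lam i ≠ 0).card ≤ n →
    ∃ lam' : ι → ℝ, (∀ i, 0 ≤ lam' i) ∧
      (Finset.univ.filter fun i => lam' i ≠ 0).card ≤ Fintype.card κ + 2 ∧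
      (∀ k, ∑ i, lam' i * c i k = ∑ i, lam i * c i k) ∧
      (∑ i, lam' i * f₂ i = ∑ i, lam i * f₂ i) ∧
      (∑ i, lam' i * f₃ i = ∑ i, lam i * f₃ i) ∧
      (∑ i, lam i * f₁ i ≤ ∑ i, lam' i * f₁ i) := by
  intro n
  induction n with
  | zero =>
    intro lam hlam hcard
    exact ⟨lam, hlam, le_trans (Nat.le_of_eq (Nat.eq_zero_of_le_zero hcard)) (Nat.zero_le _),
      fun k => rfl, rfl, rfl, le_rfl⟩
  | succ n ih =>
    intro lam hlam hcard
    by_cases hdone : (Finset.univ.filter fun i => lam i ≠ 0).card ≤ Fintype.card κ + 2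
    · exact ⟨lam, hlam, hdone, fun k => rfl, rfl, rfl, le_rfl⟩
    set supp := Finset.univ.filter fun i => lam i ≠ 0 with hsupp
    push_neg at hdone
    -- linear map
    set T : (↥supp → ℝ) →ₗ[ℝ] (κ → ℝ) × ℝ × ℝ :=
      { toFun := fun μ => (fun k => ∑ j, μ j * c j.1 k, ∑ j, μ j * f₂ j.1, ∑ j, μ j * f₃ j.1)
        map_add' := by
          intro x y
          refine Prod.ext (funext fun k => ?_) (Prod.ext ?_ ?_) <;>
            simp [add_mul, Finset.sum_add_distrib]
        map_smul' := by
          intro r x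
          refine Prod.ext (funext fun k => ?_) (Prod.ext ?_ ?_) <;>
            simp [Finset.mul_sum, mul_assoc] } with hT
    have hnotinj : ¬ Function.Injective T := by
      intro hinj
      have h1 := LinearMap.finrank_le_finrank_of_injective hinj
      have h2 : Module.finrank ℝ (↥supp → ℝ) = supp.card := by
        simp [Module.finrank_pi, Fintype.card_coe]
      have h3 : Module.finrank ℝ ((κ → ℝ) × ℝ × ℝ) = Fintype.card κ + 2 := by
        simp [Module.finrank_prod, Module.finrank_pi]
      omega
    obtain ⟨a, b, hab, hne⟩ := Function.not_injective_iff.1 hnotinj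
    set ζ : ↥supp → ℝ := a - b with hζ
    have hζne : ζ ≠ 0 := sub_ne_zero.2 hne
    have hTζ : T ζ = 0 := by rw [hζ, map_sub, hab, sub_self]
    -- components of T ζ = 0
    have hTc : ∀ k, ∑ j : ↥supp, ζ j * c j.1 k = 0 := by
      intro k
      have := congrArg (fun z => z.1 k) hTζ
      simpa [hT] using this
    have hTf2 : ∑ j : ↥supp, ζ j * f₂ j.1 = 0 := by
      have := congrArg (fun z => z.2.1) hTζ
      simpa [hT] using this
    have hTf3 : ∑ j : ↥supp, ζ j * f₃ j.1 = 0 := by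
      have := congrArg (fun z => z.2.2) hTζ
      simpa [hT] using this
    -- extend to ι
    classical
    set ζe : ι → ℝ := fun i => if h : i ∈ supp then ζ ⟨i, h⟩ else 0 with hζe
    have hsum_eq : ∀ g : ι → ℝ, ∑ i, ζe i * g i = ∑ j : ↥supp, ζ j * g j.1 := by
      intro g
      calc ∑ i : ι, ζe i * g i = ∑ i ∈ supp, ζe i * g i :=
            (Finset.sum_subset (Finset.subset_univ supp)
              (fun i _ hi => by simp [hζe, dif_neg hi])).symm
        _ = ∑ j : ↥supp, ζe j.1 * g j.1 := (Finset.sum_coe_sort supp _).symm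
        _ = ∑ j : ↥supp, ζ j * g j.1 :=
            Finset.sum_congr rfl fun j _ => by simp [hζe, dif_pos j.2]
    have hzc : ∀ k, ∑ i, ζe i * c i k = 0 := fun k => by rw [hsum_eq]; exact hTc k
    have hzf2 : ∑ i, ζe i * f₂ i = 0 := by rw [hsum_eq]; exact hTf2
    have hzf3 : ∑ i, ζe i * f₃ i = 0 := by rw [hsum_eq]; exact hTf3
    have hzsum : ∑ i, ζe i = 0 := by
      calc ∑ i, ζe i = ∑ i, ∑ k, ζe i * c i k := by
            refine Finset.sum_congr rfl fun i _ => ?_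
            rw [← Finset.mul_sum, hc i, mul_one]
        _ = ∑ k, ∑ i, ζe i * c i k := Finset.sum_comm
        _ = 0 := by simp [hzc]
    have hzne : ∃ i, ζe i ≠ 0 := by
      obtain ⟨j, hj⟩ := Function.ne_iff.1 hζne
      exact ⟨j.1, by simpa [hζe, dif_pos j.2] using hj⟩
    have hzsupp : ∀ i, ζe i ≠ 0 → i ∈ supp := by
      intro i hi
      by_contra hc'
      exact hi (by simp [hζe, dif_neg hc'])
    -- the one-step reduction, for a direction ξ
    have step : ∀ ξ : ι → ℝ, (∃ i, ξ i ≠ 0) → (∑ i, ξ i = 0) →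
        (∀ i, ξ i ≠ 0 → i ∈ supp) →
        (∀ k, ∑ i, ξ i * c i k = 0) → (∑ i, ξ i * f₂ i = 0) → (∑ i, ξ i * f₃ i = 0) →
        (0 ≤ ∑ i, ξ i * f₁ i) →
        ∃ lam'' : ι → ℝ, (∀ i, 0 ≤ lam'' i) ∧
          (Finset.univ.filter fun i => lam'' i ≠ 0).card < supp.card ∧
          (∀ k, ∑ i, lam'' i * c i k = ∑ i, lam i * c i k) ∧
          (∑ i, lam'' i * f₂ i = ∑ i, lam i * f₂ i) ∧
          (∑ i, lam'' i * f₃ i = ∑ i, lam i * f₃ i) ∧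
          (∑ i, lam i * f₁ i ≤ ∑ i, lam'' i * f₁ i) := by
      intro ξ hξne hξsum hξsupp hξc hξf2 hξf3 hξf1
      -- there is a negative coordinate
      have hneg : ∃ i, ξ i < 0 := by
        by_contra hno
        push_neg at hno
        obtain ⟨i0, hi0⟩ := hξne
        exact hi0 ((Finset.sum_eq_zero_iff_of_nonneg
          (fun i _ => hno i)).1 hξsum i0 (Finset.mem_univ i0))
      set neg := Finset.univ.filter fun i => ξ i < 0 with hnegdef
      have hnegne : neg.Nonempty := by
        obtain ⟨i, hi⟩ := hneg
        exact ⟨i, by simp [hnegdef, hi]⟩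
      obtain ⟨j₀, hj₀mem, hj₀min⟩ := Finset.exists_min_image neg (fun i => lam i / (-ξ i)) hnegne
      have hj₀neg : ξ j₀ < 0 := by simpa [hnegdef] using hj₀mem
      set t := lam j₀ / (-ξ j₀) with ht
      have ht0 : 0 ≤ t := div_nonneg (hlam j₀) (by linarith)
      set lam'' : ι → ℝ := fun i => lam i + t * ξ i with hlam''
      have hnn : ∀ i, 0 ≤ lam'' i := by
        intro i
        rcases le_or_gt 0 (ξ i) with h | h
        · have := mul_nonneg ht0 h
          show 0 ≤ lam i + t * ξ i
          linarith [hlam i]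
        · have himem : i ∈ neg := by simp [hnegdef, h]
          have hle := hj₀min i himem
          have hξipos : 0 < -ξ i := by linarith
          have : t * (-ξ i) ≤ lam i := by
            calc t * (-ξ i) ≤ (lam i / (-ξ i)) * (-ξ i) := by
                  exact mul_le_mul_of_nonneg_right hle (le_of_lt hξipos)
              _ = lam i := div_mul_cancel₀ _ (ne_of_gt hξipos)
          show 0 ≤ lam i + t * ξ i
          linarith
      have hsub : ∀ i, lam'' i ≠ 0 → i ∈ supp := by
        intro i hi
        by_contra hns
        have h1 : lam i = 0 := by
          by_contra hl
          exact hns (by simp [hsupp, hl])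
        have h2 : ξ i = 0 := by
          by_contra hx
          exact hns (hξsupp i hx)
        exact hi (by simp [hlam'', h1, h2])
      have hj₀ne : ξ j₀ ≠ 0 := ne_of_lt hj₀neg
      have hj₀zero : lam'' j₀ = 0 := by
        show lam j₀ + t * ξ j₀ = 0
        rw [ht, div_neg, neg_mul, div_mul_cancel₀ _ hj₀ne]
        ring
      have hj₀supp : j₀ ∈ supp := hξsupp j₀ (ne_of_lt hj₀neg)
      have hcard' : (Finset.univ.filter fun i => lam'' i ≠ 0).card < supp.card := by
        apply Finset.card_lt_card
        rw [Finset.ssubset_iff_of_subset]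
        · exact ⟨j₀, hj₀supp, by simp [hj₀zero]⟩
        · intro i hi
          exact hsub i (by simpa using hi)
      refine ⟨lam'', hnn, hcard', ?_, ?_, ?_, ?_⟩
      · intro k
        simp only [hlam'', add_mul, Finset.sum_add_distrib, mul_assoc, ← Finset.mul_sum, hξc k]
        ring
      · simp only [hlam'', add_mul, Finset.sum_add_distrib, mul_assoc, ← Finset.mul_sum, hξf2]
        ring
      · simp only [hlam'', add_mul, Finset.sum_add_distrib, mul_assoc, ← Finset.mul_sum, hξf3]
        ring
      · simp only [hlam'', add_mul, Finset.sum_add_distrib, mul_assoc, ← Finset.mul_sum]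
        linarith [mul_nonneg ht0 hξf1]
    -- apply step with the right sign
    have hstep : ∃ lam'' : ι → ℝ, (∀ i, 0 ≤ lam'' i) ∧
        (Finset.univ.filter fun i => lam'' i ≠ 0).card < supp.card ∧
        (∀ k, ∑ i, lam'' i * c i k = ∑ i, lam i * c i k) ∧
        (∑ i, lam'' i * f₂ i = ∑ i, lam i * f₂ i) ∧
        (∑ i, lam'' i * f₃ i = ∑ i, lam i * f₃ i) ∧
        (∑ i, lam i * f₁ i ≤ ∑ i, lam'' i * f₁ i) := by
      rcases le_or_gt 0 (∑ i, ζe i * f₁ i) with hpos | hneg'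
      · exact step ζe hzne hzsum hzsupp hzc hzf2 hzf3 hpos
      · refine step (-ζe) ?_ ?_ ?_ ?_ ?_ ?_ ?_
        · obtain ⟨i, hi⟩ := hzne
          exact ⟨i, by simpa using hi⟩
        · simpa using hzsum
        · intro i hi
          exact hzsupp i (by simpa using hi)
        · intro k
          simp only [Pi.neg_apply, neg_mul, Finset.sum_neg_distrib, hzc k, neg_zero]
        · simp only [Pi.neg_apply, neg_mul, Finset.sum_neg_distrib, hzf2, neg_zero]
        · simp only [Pi.neg_apply, neg_mul, Finset.sum_neg_distrib, hzf3, neg_zero]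
        · simp only [Pi.neg_apply, neg_mul, Finset.sum_neg_distrib]
          linarith
    obtain ⟨lam'', hnn'', hcard'', hc'', hf2'', hf3'', hf1''⟩ := hstep
    obtain ⟨lam', hnn', hcard', hc', hf2', hf3', hf1'⟩ :=
      ih lam'' hnn'' (by omega)
    exact ⟨lam', hnn', hcard',
      fun k => (hc' k).trans (hc'' k), hf2'.trans hf2'', hf3'.trans hf3'',
      le_trans hf1'' hf1'⟩
section Joint
variable {𝒮 𝒳₁ 𝒳₂ 𝒴 : Type*} [Fintype 𝒮] [Fintype 𝒳₁] [Fintype 𝒳₂] [Fintype 𝒴]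

/-- joint of a base pmf on `(S,X₁,X₂)` with the channel `W`. -/
def jW (W : 𝒴 → 𝒳₁ → 𝒳₂ → 𝒮 → ℝ) (r : 𝒮 × 𝒳₁ × 𝒳₂ → ℝ) : 𝒮 × 𝒳₁ × 𝒳₂ × 𝒴 → ℝ :=
  fun t => r (t.1, t.2.1, t.2.2.1) * W t.2.2.2 t.2.1 t.2.2.1 t.1

/-- reindexing equivalence pulling out the `𝒱` coordinate. -/
def eqv (𝒱 : Type*) : (𝒮 × 𝒱 × 𝒳₁ × 𝒳₂ × 𝒴) ≃ (𝒱 × (𝒮 × 𝒳₁ × 𝒳₂ × 𝒴)) where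
  toFun q := (q.2.1, (q.1, q.2.2.1, q.2.2.2.1, q.2.2.2.2))
  invFun w := (w.2.1, w.1, w.2.2.1, w.2.2.2.1, w.2.2.2.2)
  left_inv q := rfl
  right_inv w := rfl

variable (QS : 𝒮 → ℝ) (W : 𝒴 → 𝒳₁ → 𝒳₂ → 𝒮 → ℝ) (PX2 : 𝒳₂ → ℝ) (PX12 : 𝒳₁ → 𝒳₂ → ℝ)

/-- key sum-reindexing: a sum over the big space with the `𝒱`-coordinate pinned. -/
lemma sum_collapse {𝒱 : Type*} [Fintype 𝒱] (G : 𝒱 → 𝒮 × 𝒳₁ × 𝒳₂ × 𝒴 → ℝ) :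
    ∑ q : 𝒮 × 𝒱 × 𝒳₁ × 𝒳₂ × 𝒴, G q.2.1 (q.1, q.2.2.1, q.2.2.2.1, q.2.2.2.2)
      = ∑ v' : 𝒱, ∑ t : 𝒮 × 𝒳₁ × 𝒳₂ × 𝒴, G v' t := by
  rw [← Equiv.sum_comp ((eqv 𝒱).symm : (𝒱 × (𝒮 × 𝒳₁ × 𝒳₂ × 𝒴)) ≃ (𝒮 × 𝒱 × 𝒳₁ × 𝒳₂ × 𝒴))
      (fun q : 𝒮 × 𝒱 × 𝒳₁ × 𝒳₂ × 𝒴 => G q.2.1 (q.1, q.2.2.1, q.2.2.2.1, q.2.2.2.2)),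
    Fintype.sum_prod_type]
  rfl

lemma pr_cond_eq {𝒱 α : Type*} [Fintype 𝒱] (PV : 𝒮 → 𝒳₁ → 𝒳₂ → 𝒱 → ℝ) (v : 𝒱)
    (g : 𝒮 × 𝒳₁ × 𝒳₂ × 𝒴 → α) (a : α) :
    pr (cond (jointP QS W PX2 PX12 PV) (fun q => q.2.1) v)
        (fun q => g (q.1, q.2.2.1, q.2.2.2.1, q.2.2.2.2)) a
    = pr (jW W (fun k => (pr (jointP QS W PX2 PX12 PV) (fun q => q.2.1) v)⁻¹ *
        (QS k.1 * PX2 k.2.2 * PX12 k.2.1 k.2.2 * PV k.1 k.2.1 k.2.2 v))) g a := by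
  set wv := pr (jointP QS W PX2 PX12 PV) (fun q => q.2.1) v with hw
  show (∑ q : 𝒮 × 𝒱 × 𝒳₁ × 𝒳₂ × 𝒴, if g (q.1, q.2.2.1, q.2.2.2.1, q.2.2.2.2) = a
      then cond (jointP QS W PX2 PX12 PV) (fun q => q.2.1) v q else 0) = _
  set G : 𝒱 → 𝒮 × 𝒳₁ × 𝒳₂ × 𝒴 → ℝ := fun v' t => if v' = v then
          (if g t = a then wv⁻¹ * (QS t.1 * PX2 t.2.2.1 * PX12 t.2.1 t.2.2.1
            * PV t.1 t.2.1 t.2.2.1 v * W t.2.2.2 t.2.1 t.2.2.1 t.1) else 0) else 0 with hG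
  have hterm : ∀ q : 𝒮 × 𝒱 × 𝒳₁ × 𝒳₂ × 𝒴,
      (if g (q.1, q.2.2.1, q.2.2.2.1, q.2.2.2.2) = a
        then cond (jointP QS W PX2 PX12 PV) (fun q => q.2.1) v q else 0)
      = G q.2.1 (q.1, q.2.2.1, q.2.2.2.1, q.2.2.2.2) := by
    intro q
    simp only [hG, cond, jointP, ← hw]
    by_cases hv : q.2.1 = v
    · simp only [hv]
      by_cases ha : g (q.1, q.2.2.1, q.2.2.2.1, q.2.2.2.2) = a <;> simp [ha, hv]
    · by_cases ha : g (q.1, q.2.2.1, q.2.2.2.1, q.2.2.2.2) = a <;> simp [ha, hv]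
  rw [Finset.sum_congr rfl fun q _ => hterm q, sum_collapse G]
  simp only [hG]
  rw [Finset.sum_comm]
  unfold pr jW
  refine Finset.sum_congr rfl fun t _ => ?_
  rw [Finset.sum_ite_eq' Finset.univ v]
  simp only [Finset.mem_univ, if_true]
  by_cases ha : g t = a <;> simp [ha] <;> ring

lemma pr_marg_eq {𝒱 α : Type*} [Fintype 𝒱] (PV : 𝒮 → 𝒳₁ → 𝒳₂ → 𝒱 → ℝ)
    (hPV1 : ∀ s x1 x2, ∑ v, PV s x1 x2 v = 1)
    (g : 𝒮 × 𝒳₁ × 𝒳₂ × 𝒴 → α) (a : α) :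
    pr (jointP QS W PX2 PX12 PV) (fun q => g (q.1, q.2.2.1, q.2.2.2.1, q.2.2.2.2)) a
    = pr (jW W (fun k => QS k.1 * PX2 k.2.2 * PX12 k.2.1 k.2.2)) g a := by
  show (∑ q : 𝒮 × 𝒱 × 𝒳₁ × 𝒳₂ × 𝒴, if g (q.1, q.2.2.1, q.2.2.2.1, q.2.2.2.2) = a
      then jointP QS W PX2 PX12 PV q else 0) = _
  have hterm : ∀ q : 𝒮 × 𝒱 × 𝒳₁ × 𝒳₂ × 𝒴,
      (if g (q.1, q.2.2.1, q.2.2.2.1, q.2.2.2.2) = a then jointP QS W PX2 PX12 PV q else 0)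
      = (fun v' (t : 𝒮 × 𝒳₁ × 𝒳₂ × 𝒴) =>
          if g t = a then QS t.1 * PX2 t.2.2.1 * PX12 t.2.1 t.2.2.1
            * PV t.1 t.2.1 t.2.2.1 v' * W t.2.2.2 t.2.1 t.2.2.1 t.1 else 0)
          q.2.1 (q.1, q.2.2.1, q.2.2.2.1, q.2.2.2.2) := by
    intro q; rfl
  rw [Finset.sum_congr rfl fun q _ => hterm q,
    sum_collapse (fun v' (t : 𝒮 × 𝒳₁ × 𝒳₂ × 𝒴) =>
          if g t = a then QS t.1 * PX2 t.2.2.1 * PX12 t.2.1 t.2.2.1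
            * PV t.1 t.2.1 t.2.2.1 v' * W t.2.2.2 t.2.1 t.2.2.1 t.1 else 0),
    Finset.sum_comm]
  unfold pr jW
  refine Finset.sum_congr rfl fun t _ => ?_
  by_cases ha : g t = a
  · simp only [ha, if_true]
    rw [← Finset.sum_mul]
    have : ∑ v' : 𝒱, QS t.1 * PX2 t.2.2.1 * PX12 t.2.1 t.2.2.1 * PV t.1 t.2.1 t.2.2.1 v'
        = QS t.1 * PX2 t.2.2.1 * PX12 t.2.1 t.2.2.1 := by
      rw [← Finset.mul_sum, hPV1, mul_one]
    rw [this]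
  · simp [ha]

/-- base marginal on `(S,X₁,X₂)`. -/
def P3 : 𝒮 × 𝒳₁ × 𝒳₂ → ℝ := fun k => QS k.1 * PX2 k.2.2 * PX12 k.2.1 k.2.2

/-- conditional marginal on `(S,X₁,X₂)` given `V = v`. -/
def rho {𝒱 : Type*} [Fintype 𝒱] (PV : 𝒮 → 𝒳₁ → 𝒳₂ → 𝒱 → ℝ) (v : 𝒱) :
    𝒮 × 𝒳₁ × 𝒳₂ → ℝ :=
  fun k => (pr (jointP QS W PX2 PX12 PV) (fun q => q.2.1) v)⁻¹ *
    (QS k.1 * PX2 k.2.2 * PX12 k.2.1 k.2.2 * PV k.1 k.2.1 k.2.2 v)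

/-- the three per-letter functionals. -/
def F1 (r : 𝒮 × 𝒳₁ × 𝒳₂ → ℝ) : ℝ :=
  ent (jW W r) (fun t => (t.1, t.2.2.1)) - ent (jW W r) (fun t => (t.2.2.1, t.2.2.2))
def F2 (r : 𝒮 × 𝒳₁ × 𝒳₂ → ℝ) : ℝ :=
  ent (jW W r) (fun t => (t.2.1, t.2.2.1)) + ent (jW W r) (fun t => (t.2.2.1, t.2.2.2))
    - ent (jW W r) (fun t => (t.2.1, t.2.2.1, t.2.2.2)) - ent (jW W r) (fun t => t.2.2.1)
def F3 (r : 𝒮 × 𝒳₁ × 𝒳₂ → ℝ) : ℝ :=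
  ent (jW W r) (fun t => (t.1, t.2.1, t.2.2.1))
    - ent (jW W r) (fun t => (t.2.1, t.2.2.1, t.2.2.2))

/-- V-decomposition of an entropy of `(V, g(S,X₁,X₂,Y))`. -/
lemma entV {𝒱 α : Type*} [Fintype 𝒱] [Fintype α] (PV : 𝒮 → 𝒳₁ → 𝒳₂ → 𝒱 → ℝ)
    (hp : ∀ ω, 0 ≤ jointP QS W PX2 PX12 PV ω) (g : 𝒮 × 𝒳₁ × 𝒳₂ × 𝒴 → α) :
    ent (jointP QS W PX2 PX12 PV)
        (fun q => (q.2.1, g (q.1, q.2.2.1, q.2.2.2.1, q.2.2.2.2)))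
      = ent (jointP QS W PX2 PX12 PV) (fun q => q.2.1)
        + ∑ v : 𝒱, pr (jointP QS W PX2 PX12 PV) (fun q => q.2.1) v
            * ent (jW W (rho QS W PX2 PX12 PV v)) g := by
  rw [ent_pair_decomp (jointP QS W PX2 PX12 PV) hp (fun q => q.2.1)
    (fun q => g (q.1, q.2.2.1, q.2.2.2.1, q.2.2.2.2))]
  congr 1
  refine Finset.sum_congr rfl fun v _ => ?_
  congr 1
  exact ent_congr (fun a => pr_cond_eq QS W PX2 PX12 PV v g a)

/-- The full decomposition of the three information quantities. -/
lemma decomp {𝒱 : Type*} [Fintype 𝒱] (PV : 𝒮 → 𝒳₁ → 𝒳₂ → 𝒱 → ℝ)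
    (hp : ∀ ω, 0 ≤ jointP QS W PX2 PX12 PV ω)
    (hPV1 : ∀ s x1 x2, ∑ v, PV s x1 x2 v = 1) :
    ((mi (jointP QS W PX2 PX12 PV) (fun q => (q.2.1, q.2.2.2.1)) (fun q => q.2.2.2.2)
        - mi (jointP QS W PX2 PX12 PV) (fun q => (q.2.1, q.2.2.2.1)) (fun q => q.1))
      = ent (jW W (P3 QS PX2 PX12)) (fun t => t.2.2.2)
        - ent (jW W (P3 QS PX2 PX12)) (fun t => t.1)
        + ∑ v : 𝒱, pr (jointP QS W PX2 PX12 PV) (fun q => q.2.1) v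
            * F1 W (rho QS W PX2 PX12 PV v))
    ∧ (cmi (jointP QS W PX2 PX12 PV) (fun q => q.2.2.1) (fun q => q.2.2.2.2)
          (fun q => (q.2.1, q.2.2.2.1))
      = ∑ v : 𝒱, pr (jointP QS W PX2 PX12 PV) (fun q => q.2.1) v
            * F2 W (rho QS W PX2 PX12 PV v))
    ∧ ((mi (jointP QS W PX2 PX12 PV) (fun q => (q.2.1, q.2.2.1, q.2.2.2.1)) (fun q => q.2.2.2.2)
        - mi (jointP QS W PX2 PX12 PV) (fun q => (q.2.1, q.2.2.1, q.2.2.2.1)) (fun q => q.1))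
      = ent (jW W (P3 QS PX2 PX12)) (fun t => t.2.2.2)
        - ent (jW W (P3 QS PX2 PX12)) (fun t => t.1)
        + ∑ v : 𝒱, pr (jointP QS W PX2 PX12 PV) (fun q => q.2.1) v
            * F3 W (rho QS W PX2 PX12 PV v)) := by
  set p := jointP QS W PX2 PX12 PV with hpdef
  set wv := pr (jointP QS W PX2 PX12 PV) (fun q => q.2.1) with hwv
  -- marginal identities
  have hY : ent p (fun q => q.2.2.2.2) = ent (jW W (P3 QS PX2 PX12)) (fun t => t.2.2.2) :=
    ent_congr (fun a => pr_marg_eq QS W PX2 PX12 PV hPV1 (fun t => t.2.2.2) a)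
  have hS : ent p (fun q => q.1) = ent (jW W (P3 QS PX2 PX12)) (fun t => t.1) :=
    ent_congr (fun a => pr_marg_eq QS W PX2 PX12 PV hPV1 (fun t => t.1) a)
  -- recombination equalities
  have e1 : ent p (fun q => ((q.2.1, q.2.2.2.1), q.2.2.2.2))
      = ent p (fun q => (q.2.1, (q.2.2.2.1, q.2.2.2.2))) :=
    ent_comp_inj p (fun q => (q.2.1, (q.2.2.2.1, q.2.2.2.2)))
      (f := fun z : _ × _ × _ => ((z.1, z.2.1), z.2.2))
      (fun a b hab => by
        obtain ⟨a1, a2, a3⟩ := a; obtain ⟨b1, b2, b3⟩ := b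
        simp only [Prod.mk.injEq] at hab ⊢; tauto)
  have e2 : ent p (fun q => ((q.2.1, q.2.2.2.1), q.1))
      = ent p (fun q => (q.2.1, (q.1, q.2.2.2.1))) :=
    ent_comp_inj p (fun q => (q.2.1, (q.1, q.2.2.2.1)))
      (f := fun z : _ × _ × _ => ((z.1, z.2.2), z.2.1))
      (fun a b hab => by
        obtain ⟨a1, a2, a3⟩ := a; obtain ⟨b1, b2, b3⟩ := b
        simp only [Prod.mk.injEq] at hab ⊢; tauto)
  have e3 : ent p (fun q => (q.2.2.1, (q.2.1, q.2.2.2.1)))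
      = ent p (fun q => (q.2.1, (q.2.2.1, q.2.2.2.1))) :=
    ent_comp_inj p (fun q => (q.2.1, (q.2.2.1, q.2.2.2.1)))
      (f := fun z : _ × _ × _ => (z.2.1, (z.1, z.2.2)))
      (fun a b hab => by
        obtain ⟨a1, a2, a3⟩ := a; obtain ⟨b1, b2, b3⟩ := b
        simp only [Prod.mk.injEq] at hab ⊢; tauto)
  have e4 : ent p (fun q => (q.2.2.2.2, (q.2.1, q.2.2.2.1)))
      = ent p (fun q => (q.2.1, (q.2.2.2.1, q.2.2.2.2))) :=
    ent_comp_inj p (fun q => (q.2.1, (q.2.2.2.1, q.2.2.2.2)))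
      (f := fun z : _ × _ × _ => (z.2.2, (z.1, z.2.1)))
      (fun a b hab => by
        obtain ⟨a1, a2, a3⟩ := a; obtain ⟨b1, b2, b3⟩ := b
        simp only [Prod.mk.injEq] at hab ⊢; tauto)
  have e5 : ent p (fun q => (q.2.2.1, (q.2.2.2.2, (q.2.1, q.2.2.2.1))))
      = ent p (fun q => (q.2.1, (q.2.2.1, q.2.2.2.1, q.2.2.2.2))) :=
    ent_comp_inj p (fun q => (q.2.1, (q.2.2.1, q.2.2.2.1, q.2.2.2.2)))
      (f := fun z : _ × _ × _ × _ => (z.2.1, (z.2.2.2, (z.1, z.2.2.1))))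
      (fun a b hab => by
        obtain ⟨a1, a2, a3, a4⟩ := a; obtain ⟨b1, b2, b3, b4⟩ := b
        simp only [Prod.mk.injEq] at hab ⊢; tauto)
  have e6 : ent p (fun q => ((q.2.1, q.2.2.1, q.2.2.2.1), q.2.2.2.2))
      = ent p (fun q => (q.2.1, (q.2.2.1, q.2.2.2.1, q.2.2.2.2))) :=
    ent_comp_inj p (fun q => (q.2.1, (q.2.2.1, q.2.2.2.1, q.2.2.2.2)))
      (f := fun z : _ × _ × _ × _ => ((z.1, z.2.1, z.2.2.1), z.2.2.2))
      (fun a b hab => by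
        obtain ⟨a1, a2, a3, a4⟩ := a; obtain ⟨b1, b2, b3, b4⟩ := b
        simp only [Prod.mk.injEq] at hab ⊢; tauto)
  have e7 : ent p (fun q => ((q.2.1, q.2.2.1, q.2.2.2.1), q.1))
      = ent p (fun q => (q.2.1, (q.1, q.2.2.1, q.2.2.2.1))) :=
    ent_comp_inj p (fun q => (q.2.1, (q.1, q.2.2.1, q.2.2.2.1)))
      (f := fun z : _ × _ × _ × _ => ((z.1, z.2.2.1, z.2.2.2), z.2.1))
      (fun a b hab => by
        obtain ⟨a1, a2, a3, a4⟩ := a; obtain ⟨b1, b2, b3, b4⟩ := b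
        simp only [Prod.mk.injEq] at hab ⊢; tauto)
  -- V-decompositions
  have dX2 := entV QS W PX2 PX12 PV hp (fun t => t.2.2.1)
  have dX2Y := entV QS W PX2 PX12 PV hp (fun t => (t.2.2.1, t.2.2.2))
  have dSX2 := entV QS W PX2 PX12 PV hp (fun t => (t.1, t.2.2.1))
  have dX12 := entV QS W PX2 PX12 PV hp (fun t => (t.2.1, t.2.2.1))
  have dX12Y := entV QS W PX2 PX12 PV hp (fun t => (t.2.1, t.2.2.1, t.2.2.2))
  have dSX12 := entV QS W PX2 PX12 PV hp (fun t => (t.1, t.2.1, t.2.2.1))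
  refine ⟨?_, ?_, ?_⟩
  · unfold mi
    rw [e1, e2, dX2Y, dSX2, hY, hS]
    have : ∑ v : 𝒱, wv v * F1 W (rho QS W PX2 PX12 PV v)
        = ∑ v : 𝒱, wv v * ent (jW W (rho QS W PX2 PX12 PV v)) (fun t => (t.1, t.2.2.1))
          - ∑ v : 𝒱, wv v * ent (jW W (rho QS W PX2 PX12 PV v)) (fun t => (t.2.2.1, t.2.2.2)) := by
      rw [← Finset.sum_sub_distrib]
      exact Finset.sum_congr rfl fun v _ => by unfold F1; ring
    rw [this]
    ring
  · unfold cmi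
    rw [e3, e4, e5, dX2, dX2Y, dX12, dX12Y]
    have : ∑ v : 𝒱, wv v * F2 W (rho QS W PX2 PX12 PV v)
        = ∑ v : 𝒱, wv v * ent (jW W (rho QS W PX2 PX12 PV v)) (fun t => (t.2.1, t.2.2.1))
          + ∑ v : 𝒱, wv v * ent (jW W (rho QS W PX2 PX12 PV v)) (fun t => (t.2.2.1, t.2.2.2))
          - ∑ v : 𝒱, wv v * ent (jW W (rho QS W PX2 PX12 PV v)) (fun t => (t.2.1, t.2.2.1, t.2.2.2))
          - ∑ v : 𝒱, wv v * ent (jW W (rho QS W PX2 PX12 PV v)) (fun t => t.2.2.1) := by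
      rw [← Finset.sum_add_distrib, ← Finset.sum_sub_distrib, ← Finset.sum_sub_distrib]
      exact Finset.sum_congr rfl fun v _ => by unfold F2; ring
    rw [this]
    ring
  · unfold mi
    rw [e6, e7, dX12Y, dSX12, hY, hS]
    have : ∑ v : 𝒱, wv v * F3 W (rho QS W PX2 PX12 PV v)
        = ∑ v : 𝒱, wv v * ent (jW W (rho QS W PX2 PX12 PV v)) (fun t => (t.1, t.2.1, t.2.2.1))
          - ∑ v : 𝒱, wv v * ent (jW W (rho QS W PX2 PX12 PV v)) (fun t => (t.2.1, t.2.2.1, t.2.2.2)) := by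
      rw [← Finset.sum_sub_distrib]
      exact Finset.sum_congr rfl fun v _ => by unfold F3; ring
    rw [this]
    ring

lemma w_formula {𝒱 : Type*} [Fintype 𝒱] (PV : 𝒮 → 𝒳₁ → 𝒳₂ → 𝒱 → ℝ)
    (hW1 : ∀ x1 x2 s, ∑ y, W y x1 x2 s = 1) (v : 𝒱) :
    pr (jointP QS W PX2 PX12 PV) (fun q => q.2.1) v
      = ∑ k : 𝒮 × 𝒳₁ × 𝒳₂, P3 QS PX2 PX12 k * PV k.1 k.2.1 k.2.2 v := by
  show (∑ q : 𝒮 × 𝒱 × 𝒳₁ × 𝒳₂ × 𝒴,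
      if q.2.1 = v then jointP QS W PX2 PX12 PV q else 0) = _
  have hterm : ∀ q : 𝒮 × 𝒱 × 𝒳₁ × 𝒳₂ × 𝒴,
      (if q.2.1 = v then jointP QS W PX2 PX12 PV q else 0)
      = (fun v' (t : 𝒮 × 𝒳₁ × 𝒳₂ × 𝒴) => if v' = v then
          QS t.1 * PX2 t.2.2.1 * PX12 t.2.1 t.2.2.1 * PV t.1 t.2.1 t.2.2.1 v'
            * W t.2.2.2 t.2.1 t.2.2.1 t.1 else 0)
          q.2.1 (q.1, q.2.2.1, q.2.2.2.1, q.2.2.2.2) := fun q => rfl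
  rw [Finset.sum_congr rfl fun q _ => hterm q,
    sum_collapse (fun v' (t : 𝒮 × 𝒳₁ × 𝒳₂ × 𝒴) => if v' = v then
          QS t.1 * PX2 t.2.2.1 * PX12 t.2.1 t.2.2.1 * PV t.1 t.2.1 t.2.2.1 v'
            * W t.2.2.2 t.2.1 t.2.2.1 t.1 else 0)]
  have hpull : ∀ v' : 𝒱, (∑ t : 𝒮 × 𝒳₁ × 𝒳₂ × 𝒴, if v' = v then
          QS t.1 * PX2 t.2.2.1 * PX12 t.2.1 t.2.2.1 * PV t.1 t.2.1 t.2.2.1 v'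
            * W t.2.2.2 t.2.1 t.2.2.1 t.1 else 0)
      = if v' = v then (∑ t : 𝒮 × 𝒳₁ × 𝒳₂ × 𝒴,
          QS t.1 * PX2 t.2.2.1 * PX12 t.2.1 t.2.2.1 * PV t.1 t.2.1 t.2.2.1 v'
            * W t.2.2.2 t.2.1 t.2.2.1 t.1) else 0 := by
    intro v'; split <;> simp
  rw [Finset.sum_congr rfl fun v' _ => hpull v', Finset.sum_ite_eq' Finset.univ v]
  simp only [Finset.mem_univ, if_true]
  simp only [Fintype.sum_prod_type]
  refine Finset.sum_congr rfl fun s _ => ?_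
  refine Finset.sum_congr rfl fun x1 _ => ?_
  refine Finset.sum_congr rfl fun x2 _ => ?_
  rw [← Finset.mul_sum, hW1, mul_one]
  rfl
end Joint
end Aux
end

/-- **Proposition 2, part 2:** any pair in `R^out` is witnessed by an auxiliary alphabet
`𝒱` with `|𝒱| ≤ |𝒮|·|𝒳₁|·|𝒳₂| + 2`. -/
theorem Rout_cardinality_bound {𝒮 𝒳₁ 𝒳₂ 𝒴 : Type*}
    [Fintype 𝒮] [Fintype 𝒳₁] [Fintype 𝒳₂] [Fintype 𝒴]
    (QS : 𝒮 → ℝ) (W : 𝒴 → 𝒳₁ → 𝒳₂ → 𝒮 → ℝ)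
    (hQ0 : ∀ s, 0 ≤ QS s) (hQ1 : ∑ s, QS s = 1)
    (hW0 : ∀ y x1 x2 s, 0 ≤ W y x1 x2 s) (hW1 : ∀ x1 x2 s, ∑ y, W y x1 x2 s = 1)
    (Rc R1 : ℝ) (h : (Rc, R1) ∈ Rout QS W) :
    ∃ (𝒱 : Type) (_ : Fintype 𝒱),
      Fintype.card 𝒱 ≤ Fintype.card 𝒮 * Fintype.card 𝒳₁ * Fintype.card 𝒳₂ + 2 ∧
      RoutW QS W 𝒱 Rc R1 := by
  classical
  obtain ⟨-, -, 𝒱, hVinst, PX2, PX12, PV, hPX20, hPX21, hPX120, hPX121, hPV0, hPV1,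
    hg1, hg2, hg3⟩ := h
  letI := hVinst
  dsimp only at hg1 hg2 hg3
  set N := Fintype.card 𝒮 * Fintype.card 𝒳₁ * Fintype.card 𝒳₂ with hN
  set P3' : 𝒮 × 𝒳₁ × 𝒳₂ → ℝ := Aux.P3 QS PX2 PX12 with hP3
  have hP3nn : ∀ k, 0 ≤ P3' k := fun k =>
    mul_nonneg (mul_nonneg (hQ0 _) (hPX20 _)) (hPX120 _ _)
  have hp : ∀ ω, 0 ≤ jointP QS W PX2 PX12 PV ω := fun ω =>
    mul_nonneg (mul_nonneg (mul_nonneg (mul_nonneg (hQ0 _) (hPX20 _)) (hPX120 _ _))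
      (hPV0 _ _ _ _)) (hW0 _ _ _ _)
  set wv : 𝒱 → ℝ := pr (jointP QS W PX2 PX12 PV) (fun q => q.2.1) with hwv
  have hwnn : ∀ v, 0 ≤ wv v := fun v => Aux.pr_nonneg _ hp _ v
  have hwf : ∀ v, wv v = ∑ k : 𝒮 × 𝒳₁ × 𝒳₂, P3' k * PV k.1 k.2.1 k.2.2 v :=
    fun v => Aux.w_formula QS W PX2 PX12 PV hW1 v
  have hzero : ∀ v, wv v = 0 → ∀ k : 𝒮 × 𝒳₁ × 𝒳₂, P3' k * PV k.1 k.2.1 k.2.2 v = 0 := by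
    intro v hv k
    exact (Finset.sum_eq_zero_iff_of_nonneg
      (fun k _ => mul_nonneg (hP3nn k) (hPV0 _ _ _ _))).1 ((hwf v).symm.trans hv) k
      (Finset.mem_univ k)
  set rhov : 𝒱 → 𝒮 × 𝒳₁ × 𝒳₂ → ℝ := Aux.rho QS W PX2 PX12 PV with hrhov
  have hrho_eq : ∀ v k, rhov v k = (wv v)⁻¹ * (P3' k * PV k.1 k.2.1 k.2.2 v) := fun v k => rfl
  have hrnn : ∀ v k, 0 ≤ rhov v k := fun v k => by
    rw [hrho_eq]
    exact mul_nonneg (inv_nonneg.2 (hwnn v)) (mul_nonneg (hP3nn k) (hPV0 _ _ _ _))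
  have hrsum : ∀ v, wv v ≠ 0 → ∑ k : 𝒮 × 𝒳₁ × 𝒳₂, rhov v k = 1 := by
    intro v hv
    have h1 : ∑ k : 𝒮 × 𝒳₁ × 𝒳₂, rhov v k
        = (wv v)⁻¹ * ∑ k : 𝒮 × 𝒳₁ × 𝒳₂, P3' k * PV k.1 k.2.1 k.2.2 v := by
      rw [Finset.mul_sum]
      exact Finset.sum_congr rfl fun k _ => hrho_eq v k
    rw [h1, ← hwf v, inv_mul_cancel₀ hv]
  have hrho0 : ∀ v k, P3' k = 0 → rhov v k = 0 := by
    intro v k hk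
    rw [hrho_eq, hk, zero_mul, mul_zero]
  -- restriction to the support of wv
  have hsub : ∀ g : 𝒱 → ℝ, (∀ v, wv v = 0 → g v = 0) →
      ∑ i : {v : 𝒱 // wv v ≠ 0}, g i.1 = ∑ v : 𝒱, g v := by
    intro g hg
    calc ∑ i : {v : 𝒱 // wv v ≠ 0}, g i.1
        = ∑ v ∈ Finset.univ.filter (fun v => wv v ≠ 0), g v :=
          (Finset.sum_subtype _ (fun v => by simp) g).symm
      _ = ∑ v : 𝒱, g v := Finset.sum_subset (Finset.subset_univ _)
          (fun v _ hv => hg v (by simpa using hv))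
  -- apply the support-reduction lemma
  obtain ⟨lam', hlnn, hlcard, hlc, hlf2, hlf3, hlf1⟩ :=
    Aux.reduce_aux (ι := {v : 𝒱 // wv v ≠ 0}) (κ := 𝒮 × 𝒳₁ × 𝒳₂)
      (fun i k => rhov i.1 k) (fun i => hrsum i.1 i.2)
      (fun i => Aux.F1 W (rhov i.1)) (fun i => Aux.F2 W (rhov i.1))
      (fun i => Aux.F3 W (rhov i.1))
      (Fintype.card {v : 𝒱 // wv v ≠ 0}) (fun i => wv i.1)
      (fun i => hwnn i.1)
      (le_trans (Finset.card_filter_le _ _) (le_of_eq (Finset.card_univ)))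
  have hmargP : ∀ k, (∑ i : {v : 𝒱 // wv v ≠ 0}, wv i.1 * rhov i.1 k) = P3' k := by
    intro k
    have h1 : ∀ i : {v : 𝒱 // wv v ≠ 0},
        wv i.1 * rhov i.1 k = P3' k * PV k.1 k.2.1 k.2.2 i.1 := by
      intro i
      rw [hrho_eq, ← mul_assoc, mul_inv_cancel₀ i.2, one_mul]
    rw [Finset.sum_congr rfl fun i _ => h1 i,
      hsub (fun v => P3' k * PV k.1 k.2.1 k.2.2 v) (fun v hv => hzero v hv k)]
    rw [← Finset.mul_sum, hPV1 k.1 k.2.1 k.2.2, mul_one]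
  have hmarg' : ∀ k, (∑ i : {v : 𝒱 // wv v ≠ 0}, lam' i * rhov i.1 k) = P3' k :=
    fun k => (hlc k).trans (hmargP k)
  -- restriction to the support of lam'
  have hsub2 : ∀ g : {v : 𝒱 // wv v ≠ 0} → ℝ, (∀ i, lam' i = 0 → g i = 0) →
      ∑ j : {i : {v : 𝒱 // wv v ≠ 0} // lam' i ≠ 0}, g j.1
        = ∑ i : {v : 𝒱 // wv v ≠ 0}, g i := by
    intro g hg
    calc ∑ j : {i : {v : 𝒱 // wv v ≠ 0} // lam' i ≠ 0}, g j.1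
        = ∑ i ∈ Finset.univ.filter (fun i => lam' i ≠ 0), g i :=
          (Finset.sum_subtype _ (fun i => by simp) g).symm
      _ = _ := Finset.sum_subset (Finset.subset_univ _)
          (fun i _ hi => hg i (by simpa using hi))
  -- the embedding into `Fin (N + 2)`
  have hcardσ : Fintype.card {i : {v : 𝒱 // wv v ≠ 0} // lam' i ≠ 0} ≤ N + 2 := by
    rw [Fintype.card_subtype]
    refine le_trans hlcard (le_of_eq ?_)
    rw [hN, Fintype.card_prod, Fintype.card_prod, mul_assoc]
  obtain ⟨emb⟩ : Nonempty ({i : {v : 𝒱 // wv v ≠ 0} // lam' i ≠ 0} ↪ Fin (N + 2)) :=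
    Function.Embedding.nonempty_of_card_le (by simpa using hcardσ)
  have hu0 : (0 : ℕ) < N + 2 := by omega
  set u₀ : Fin (N + 2) := ⟨0, hu0⟩ with hu₀
  set PV' : 𝒮 → 𝒳₁ → 𝒳₂ → Fin (N + 2) → ℝ := fun s x1 x2 u =>
    if P3' (s, x1, x2) = 0 then (if u = u₀ then 1 else 0)
    else (∑ j : {i : {v : 𝒱 // wv v ≠ 0} // lam' i ≠ 0},
        if emb j = u then lam' j.1 * rhov j.1.1 (s, x1, x2) else 0) / P3' (s, x1, x2)
    with hPV'
  have hPV'0 : ∀ s x1 x2 u, 0 ≤ PV' s x1 x2 u := by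
    intro s x1 x2 u
    simp only [hPV']
    split
    · split <;> norm_num
    · refine div_nonneg (Finset.sum_nonneg fun j _ => ?_) (hP3nn (s, x1, x2))
      split
      · exact mul_nonneg (hlnn j.1) (hrnn _ _)
      · exact le_rfl
  have hPprod : ∀ (k : 𝒮 × 𝒳₁ × 𝒳₂) u, P3' k * PV' k.1 k.2.1 k.2.2 u
      = ∑ j : {i : {v : 𝒱 // wv v ≠ 0} // lam' i ≠ 0},
          if emb j = u then lam' j.1 * rhov j.1.1 k else 0 := by
    intro k u
    simp only [hPV', Prod.mk.eta]
    by_cases hk : P3' k = 0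
    · rw [if_pos hk, hk, zero_mul]
      symm
      refine Finset.sum_eq_zero fun j _ => ?_
      rw [hrho0 j.1.1 k hk, mul_zero]
      split <;> rfl
    · rw [if_neg hk, mul_comm, div_mul_cancel₀ _ hk]
  have hPV'1 : ∀ s x1 x2, ∑ u, PV' s x1 x2 u = 1 := by
    intro s x1 x2
    by_cases hk : P3' (s, x1, x2) = 0
    · simp only [hPV', if_pos hk]
      rw [Finset.sum_ite_eq' Finset.univ u₀ (fun _ => (1 : ℝ))]
      simp
    · simp only [hPV', if_neg hk]
      rw [← Finset.sum_div, Finset.sum_comm]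
      have hcol : ∀ j : {i : {v : 𝒱 // wv v ≠ 0} // lam' i ≠ 0},
          (∑ u : Fin (N + 2), if emb j = u then lam' j.1 * rhov j.1.1 (s, x1, x2) else 0)
          = lam' j.1 * rhov j.1.1 (s, x1, x2) := by
        intro j
        rw [Finset.sum_ite_eq Finset.univ (emb j) (fun _ => lam' j.1 * rhov j.1.1 (s, x1, x2))]
        simp
      rw [Finset.sum_congr rfl fun j _ => hcol j,
        hsub2 (fun i => lam' i * rhov i.1 (s, x1, x2)) (fun i hi => mul_eq_zero_of_left hi _),
        hmarg' (s, x1, x2), div_self hk]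
  have hp' : ∀ ω, 0 ≤ jointP QS W PX2 PX12 PV' ω := fun ω =>
    mul_nonneg (mul_nonneg (mul_nonneg (mul_nonneg (hQ0 _) (hPX20 _)) (hPX120 _ _))
      (hPV'0 _ _ _ _)) (hW0 _ _ _ _)
  set wv' : Fin (N + 2) → ℝ := pr (jointP QS W PX2 PX12 PV') (fun q => q.2.1) with hwv'
  have hwf' : ∀ u, wv' u = ∑ k : 𝒮 × 𝒳₁ × 𝒳₂, P3' k * PV' k.1 k.2.1 k.2.2 u :=
    fun u => Aux.w_formula QS W PX2 PX12 PV' hW1 u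
  have hwemb : ∀ j : {i : {v : 𝒱 // wv v ≠ 0} // lam' i ≠ 0}, wv' (emb j) = lam' j.1 := by
    intro j
    rw [hwf' (emb j), Finset.sum_congr rfl fun k _ => hPprod k (emb j), Finset.sum_comm]
    have hcol : ∀ j' : {i : {v : 𝒱 // wv v ≠ 0} // lam' i ≠ 0},
        (∑ k : 𝒮 × 𝒳₁ × 𝒳₂, if emb j' = emb j then lam' j'.1 * rhov j'.1.1 k else 0)
        = if j' = j then lam' j'.1 else 0 := by
      intro j'
      by_cases hjj : j' = j
      · subst hjj
        rw [if_pos rfl, Finset.sum_congr rfl fun k _ => if_pos rfl, ← Finset.mul_sum,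
          hrsum j'.1.1 j'.1.2, mul_one]
      · rw [if_neg hjj,
          Finset.sum_congr rfl fun k _ => if_neg (fun hc => hjj (emb.injective hc)),
          Finset.sum_const_zero]
    rw [Finset.sum_congr rfl fun j' _ => hcol j', Finset.sum_ite_eq' Finset.univ j]
    simp
  have hwnotin : ∀ u, (∀ j : {i : {v : 𝒱 // wv v ≠ 0} // lam' i ≠ 0}, emb j ≠ u) →
      wv' u = 0 := by
    intro u hu
    rw [hwf' u, Finset.sum_congr rfl fun k _ => hPprod k u]
    exact Finset.sum_eq_zero fun k _ => Finset.sum_eq_zero fun j _ => if_neg (hu j)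
  have hrho' : ∀ j : {i : {v : 𝒱 // wv v ≠ 0} // lam' i ≠ 0},
      Aux.rho QS W PX2 PX12 PV' (emb j) = rhov j.1.1 := by
    intro j
    funext k
    have h1 : Aux.rho QS W PX2 PX12 PV' (emb j) k
        = (wv' (emb j))⁻¹ * (P3' k * PV' k.1 k.2.1 k.2.2 (emb j)) := rfl
    rw [h1, hwemb j, hPprod k (emb j)]
    have hcol : (∑ j' : {i : {v : 𝒱 // wv v ≠ 0} // lam' i ≠ 0},
        if emb j' = emb j then lam' j'.1 * rhov j'.1.1 k else 0)
        = lam' j.1 * rhov j.1.1 k := by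
      have heq : ∀ j' : {i : {v : 𝒱 // wv v ≠ 0} // lam' i ≠ 0},
          (if emb j' = emb j then lam' j'.1 * rhov j'.1.1 k else 0)
          = if j' = j then lam' j'.1 * rhov j'.1.1 k else 0 := by
        intro j'
        by_cases hjj : j' = j
        · subst hjj
          rw [if_pos rfl, if_pos rfl]
        · rw [if_neg hjj, if_neg (fun hc => hjj (emb.injective hc))]
      rw [Finset.sum_congr rfl fun j' _ => heq j', Finset.sum_ite_eq' Finset.univ j]
      simp
    rw [hcol, ← mul_assoc, inv_mul_cancel₀ j.2, one_mul]
  -- translation of the weighted sums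
  have hnewsum : ∀ F : (𝒮 × 𝒳₁ × 𝒳₂ → ℝ) → ℝ,
      (∑ u : Fin (N + 2), wv' u * F (Aux.rho QS W PX2 PX12 PV' u))
        = ∑ i : {v : 𝒱 // wv v ≠ 0}, lam' i * F (rhov i.1) := by
    intro F
    have h0 : ∀ u ∈ Finset.univ, u ∉ Finset.univ.map emb →
        wv' u * F (Aux.rho QS W PX2 PX12 PV' u) = 0 := by
      intro u _ hu
      have hnone : ∀ j : {i : {v : 𝒱 // wv v ≠ 0} // lam' i ≠ 0}, emb j ≠ u := by
        intro j hj
        exact hu (Finset.mem_map.2 ⟨j, Finset.mem_univ j, hj⟩)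
      rw [hwnotin u hnone, zero_mul]
    rw [← Finset.sum_subset (Finset.subset_univ (Finset.univ.map emb)) h0, Finset.sum_map]
    have hterm : ∀ j : {i : {v : 𝒱 // wv v ≠ 0} // lam' i ≠ 0},
        wv' (emb j) * F (Aux.rho QS W PX2 PX12 PV' (emb j))
        = lam' j.1 * F (rhov j.1.1) := fun j => by rw [hwemb j, hrho' j]
    rw [Finset.sum_congr rfl fun j _ => hterm j]
    exact hsub2 (fun i => lam' i * F (rhov i.1)) (fun i hi => mul_eq_zero_of_left hi _)
  have holdsum : ∀ F : (𝒮 × 𝒳₁ × 𝒳₂ → ℝ) → ℝ,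
      (∑ v : 𝒱, wv v * F (rhov v)) = ∑ i : {v : 𝒱 // wv v ≠ 0}, wv i.1 * F (rhov i.1) :=
    fun F => (hsub (fun v => wv v * F (rhov v)) (fun v hv => mul_eq_zero_of_left hv _)).symm
  -- the two decompositions
  obtain ⟨o1, o2, o3⟩ := Aux.decomp QS W PX2 PX12 PV hp hPV1
  obtain ⟨n1, n2, n3⟩ := Aux.decomp QS W PX2 PX12 PV' hp' hPV'1
  rw [← hwv, ← hrhov] at o1 o2 o3
  rw [← hwv'] at n1 n2 n3
  refine ⟨Fin (N + 2), inferInstance, by simp, PX2, PX12, PV', hPX20, hPX21, hPX120, hPX121,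
    hPV'0, hPV'1, ?_, ?_, ?_⟩
  · rw [n1, hnewsum (Aux.F1 W)]
    rw [o1, holdsum (Aux.F1 W)] at hg1
    linarith [hlf1]
  · rw [n2, hnewsum (Aux.F2 W)]
    rw [o2, holdsum (Aux.F2 W)] at hg2
    linarith [hlf2]
  · rw [n3, hnewsum (Aux.F3 W)]
    rw [o3, holdsum (Aux.F3 W)] at hg3
    linarith [hlf3]
end
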